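/- arXiv:2101.00138 — 8 statements merged into one kernel-verified Lean document; each statement's English description precedes it below -/
import Mathlib

section
/- Let m ≥ 1 and let M be a symmetric negative definite m×m real matrix such that M_{ij} ≥ 0 for all i ≠ j and such that the graph on {1,…,m} with an edge between i ≠ j whenever M_{ij} > 0 is connected. If a, b ∈ ℝ^m satisfy (Mb)_i ≤ (Ma)_i for every i, then either a_i = b_i for every i, or a_i < b_i for every i. -/
/-- Numerical form of the comparison lemma (cf. Kollár–Mori, Lemma 3.41 and
Corollary 4.2): `M` is a symmetric negative definite `m × m` real matrix with
nonnegative off-diagonal entries whose positivity graph is connected.  If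
`(M b)ᵢ ≤ (M a)ᵢ` for every `i`, then either `aᵢ = bᵢ` for every `i`, or
`aᵢ < bᵢ` for every `i`. -/
theorem stmt_0 (m : ℕ) (hm : 1 ≤ m) (M : Matrix (Fin m) (Fin m) ℝ)
    (hsymm : ∀ i j, M i j = M j i)
    (hnegdef : ∀ x : Fin m → ℝ, x ≠ 0 → ∑ i, ∑ j, x i * M i j * x j < 0)
    (hoff : ∀ i j, i ≠ j → 0 ≤ M i j)
    (hconn : (SimpleGraph.fromRel (fun i j => 0 < M i j)).Connected)
    (a b : Fin m → ℝ)
    (hle : ∀ i, ∑ j, M i j * b j ≤ ∑ j, M i j * a j) :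
    (∀ i, a i = b i) ∨ (∀ i, a i < b i) := by
  classical
  set d : Fin m → ℝ := fun i => a i - b i with hd
  have hMd : ∀ i, 0 ≤ ∑ j, M i j * d j := by
    intro i
    have h := hle i
    have he : ∑ j, M i j * d j = (∑ j, M i j * a j) - ∑ j, M i j * b j := by
      rw [← Finset.sum_sub_distrib]
      apply Finset.sum_congr rfl; intro j _; simp [hd]; ring
    linarith
  set p : Fin m → ℝ := fun i => max (d i) 0 with hp
  set n : Fin m → ℝ := fun i => max (-d i) 0 with hn
  have hpn : ∀ i, d i = p i - n i := by
    intro i; simp only [hp, hn]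
    rcases le_total (d i) 0 with h | h
    · rw [max_eq_right h, max_eq_left (by linarith)]; ring
    · rw [max_eq_left h, max_eq_right (by linarith : -d i ≤ 0)]; ring
  have hp0 : ∀ i, 0 ≤ p i := fun i => le_max_right _ _
  have hn0 : ∀ i, 0 ≤ n i := fun i => le_max_right _ _
  have hpnz : ∀ i, p i * n i = 0 := by
    intro i; simp only [hp, hn]
    rcases le_total (d i) 0 with h | h
    · rw [max_eq_right h]; ring
    · rw [max_eq_right (by linarith : -d i ≤ 0)]; ring
  have hdle : ∀ i, d i ≤ 0 := by
    by_contra hcon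
    push_neg at hcon
    obtain ⟨i0, hi0⟩ := hcon
    have hppos : 0 < p i0 := lt_of_lt_of_le hi0 (le_max_left _ _)
    have hpne : p ≠ 0 := by
      intro h0
      rw [congrFun h0 i0] at hppos
      exact lt_irrefl _ hppos
    have h1 : 0 ≤ ∑ i, ∑ j, p i * M i j * d j := by
      apply Finset.sum_nonneg; intro i _
      have he : ∑ j, p i * M i j * d j = p i * ∑ j, M i j * d j := by
        rw [Finset.mul_sum]; apply Finset.sum_congr rfl; intro j _; ring
      rw [he]; exact mul_nonneg (hp0 i) (hMd i)
    have h2 : 0 ≤ ∑ i, ∑ j, p i * M i j * n j := by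
      apply Finset.sum_nonneg; intro i _
      apply Finset.sum_nonneg; intro j _
      by_cases hij : i = j
      · subst hij
        rw [show p i * M i i * n i = M i i * (p i * n i) by ring, hpnz i, mul_zero]
      · exact mul_nonneg (mul_nonneg (hp0 i) (hoff i j hij)) (hn0 j)
    have h3 : ∑ i, ∑ j, p i * M i j * d j =
        (∑ i, ∑ j, p i * M i j * p j) - ∑ i, ∑ j, p i * M i j * n j := by
      rw [← Finset.sum_sub_distrib]
      apply Finset.sum_congr rfl; intro i _
      rw [← Finset.sum_sub_distrib]
      apply Finset.sum_congr rfl; intro j _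
      rw [hpn j]; ring
    have := hnegdef p hpne
    linarith
  by_cases hz : ∃ i, a i = b i
  · left
    obtain ⟨i0, hi0⟩ := hz
    have hd0 : d i0 = 0 := by simp [hd, hi0]
    have step : ∀ i j, (SimpleGraph.fromRel (fun i j => 0 < M i j)).Adj i j →
        d i = 0 → d j = 0 := by
      intro i j hadj hdi
      rw [SimpleGraph.fromRel_adj] at hadj
      have hMij : 0 < M i j := by
        rcases hadj with ⟨hne, h | h⟩
        · exact h
        · rw [hsymm i j]; exact h
      have hterm : ∀ k ∈ Finset.univ, M i k * d k ≤ 0 := by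
        intro k _
        by_cases hik : i = k
        · subst hik; rw [hdi, mul_zero]
        · exact mul_nonpos_of_nonneg_of_nonpos (hoff i k hik) (hdle k)
      have hsum0 : ∑ k, M i k * d k = 0 :=
        le_antisymm (Finset.sum_nonpos hterm) (hMd i)
      have hjz := (Finset.sum_eq_zero_iff_of_nonpos hterm).1 hsum0 j (Finset.mem_univ j)
      rcases mul_eq_zero.1 hjz with h | h
      · exact absurd h (ne_of_gt hMij)
      · exact h
    have walkprop : ∀ u v, ∀ w : (SimpleGraph.fromRel (fun i j => 0 < M i j)).Walk u v,
        d u = 0 → d v = 0 := by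
      intro u v w
      induction w with
      | nil => exact id
      | cons h _ ih => exact fun hu => ih (step _ _ h hu)
    intro i
    obtain ⟨w⟩ := hconn.preconnected i0 i
    have := walkprop _ _ w hd0
    simp only [hd] at this
    linarith
  · right
    push_neg at hz
    intro i
    have h := hdle i
    simp only [hd] at h
    exact lt_of_le_of_ne (by linarith) (hz i)
end

section
/- In the numerical setting for the minimal resolution of a plt surface germ, one has b_i < 2 for every i ∈ {1,…,m}. (Geometrically: for any prime exceptional divisor F of the minimal resolution of a plt surface germ (X∋x,B), one has B_Y·F < 2, where B_Y is the strict transform of B.) -/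
/-- In the numerical setting for the minimal resolution of a plt surface germ,
`b i < 2` for every `i` (geometrically: `B_Y · F < 2` for every prime
exceptional divisor `F` of the minimal resolution). -/
theorem stmt_2 (m : ℕ) (hm : 1 ≤ m) (M : Matrix (Fin m) (Fin m) ℤ)
    (hsymm : ∀ i j, M i j = M j i)
    (hnegdef : ∀ x : Fin m → ℝ, x ≠ 0 → ∑ i, ∑ j, x i * (M i j : ℝ) * x j < 0)
    (hoff : ∀ i j, i ≠ j → 0 ≤ M i j)
    (hdiag : ∀ i, M i i ≤ -2)
    (hconn : (SimpleGraph.fromRel (fun i j => 0 < M i j)).Connected)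
    (b : Fin m → ℝ) (hb : ∀ i, 0 ≤ b i)
    (a : Fin m → ℝ)
    (ha : ∀ i, ∑ j, (M i j : ℝ) * a j = -2 - (M i i : ℝ) + b i)
    (haplt : ∀ i, -1 < a i ∧ a i ≤ 0)
     :
    ∀ i, b i < 2 := by
  intro i
  have key := ha i
  have hMi : (M i i : ℝ) ≤ -2 := by exact_mod_cast hdiag i
  have h1 : (∑ j ∈ Finset.univ.erase i, (M i j : ℝ) * a j) + (M i i : ℝ) * a i
      = ∑ j, (M i j : ℝ) * a j := Finset.sum_erase_add _ _ (Finset.mem_univ i)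
  have h2 : ∑ j ∈ Finset.univ.erase i, (M i j : ℝ) * a j ≤ 0 := by
    apply Finset.sum_nonpos
    intro j hj
    have hji : j ≠ i := Finset.ne_of_mem_erase hj
    have hM : (0:ℝ) ≤ M i j := by exact_mod_cast hoff i j (Ne.symm hji)
    exact mul_nonpos_of_nonneg_of_nonpos hM (haplt j).2
  have h3 : (M i i : ℝ) * a i + (M i i : ℝ) < 0 := by
    have ha1 : (0:ℝ) < 1 + a i := by linarith [(haplt i).1]
    nlinarith
  linarith
end

section
/- In the numerical setting for the minimal resolution of a plt surface germ, there exists at most one index i ∈ {1,…,m} with b_i ≥ 1. (Geometrically: there exists at most one prime exceptional divisor F of the minimal resolution of a plt surface germ (X∋x,B) with B_Y·F ≥ 1.) -/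
private lemma walk_aux {V : Type*} {G : SimpleGraph V} {y : V → ℝ} {δ : ℝ} (hδ : 0 ≤ δ)
    (key : ∀ u u' w : V, G.Adj w u → G.Adj u u' → w ≠ u' → y w + y u' ≤ 2 * y u) :
    ∀ {u v : V} (p : G.Walk u v), p.IsPath → ∀ w, G.Adj w u → w ∉ p.support →
      y u ≤ y w - δ → y v ≤ y w - δ := by
  intro u v p
  induction p with
  | nil => exact fun _ w _ _ h => h
  | @cons u u' v h q ih =>
      intro hp w hwu hws hle
      rw [SimpleGraph.Walk.cons_isPath_iff] at hp
      simp only [SimpleGraph.Walk.support_cons, List.mem_cons, not_or] at hws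
      have hwu' : w ≠ u' := by
        intro e
        exact hws.2 (e ▸ q.start_mem_support)
      have hk := key u u' w hwu h hwu'
      have step : y u' ≤ y u - δ := by linarith
      have := ih hp.1 u h hp.2 step
      linarith

/-- In the numerical setting for the minimal resolution of a plt surface germ,
there exists at most one index `i` with `b i ≥ 1` (geometrically: at most one
prime exceptional divisor `F` of the minimal resolution with `B_Y · F ≥ 1`). -/
theorem stmt_3 (m : ℕ) (hm : 1 ≤ m) (M : Matrix (Fin m) (Fin m) ℤ)
    (hsymm : ∀ i j, M i j = M j i)
    (hnegdef : ∀ x : Fin m → ℝ, x ≠ 0 → ∑ i, ∑ j, x i * (M i j : ℝ) * x j < 0)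
    (hoff : ∀ i j, i ≠ j → 0 ≤ M i j)
    (hdiag : ∀ i, M i i ≤ -2)
    (hconn : (SimpleGraph.fromRel (fun i j => 0 < M i j)).Connected)
    (b : Fin m → ℝ) (hb : ∀ i, 0 ≤ b i)
    (a : Fin m → ℝ)
    (ha : ∀ i, ∑ j, (M i j : ℝ) * a j = -2 - (M i i : ℝ) + b i)
    (haplt : ∀ i, -1 < a i ∧ a i ≤ 0)
     :
    ∀ i j, 1 ≤ b i → 1 ≤ b j → i = j := by
  set G := SimpleGraph.fromRel (fun i j => 0 < M i j) with hG
  set y : Fin m → ℝ := fun k => -(a k) with hy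
  have hy0 : ∀ k, 0 ≤ y k := fun k => by
    have := (haplt k).2; simp only [hy]; linarith
  have hy1 : ∀ k, y k < 1 := fun k => by
    have := (haplt k).1; simp only [hy]; linarith
  -- the key estimate (*)
  have hstar : ∀ k, ∑ l ∈ Finset.univ.erase k, (M k l : ℝ) * y l ≤ 2 * y k - b k := by
    intro k
    have h2 : ∑ l, (M k l : ℝ) * y l = 2 + (M k k : ℝ) - b k := by
      have h1 := ha k
      have : ∑ l, (M k l : ℝ) * y l = -∑ l, (M k l : ℝ) * a l := by
        rw [← Finset.sum_neg_distrib]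
        exact Finset.sum_congr rfl fun l _ => by simp [hy, mul_neg]
      rw [this, h1]; ring
    have h3 : ∑ l ∈ Finset.univ.erase k, (M k l : ℝ) * y l
        = (∑ l, (M k l : ℝ) * y l) - (M k k : ℝ) * y k := by
      rw [← Finset.sum_erase_add Finset.univ _ (Finset.mem_univ k)]; ring
    have hMkk : (M k k : ℝ) ≤ -2 := by exact_mod_cast hdiag k
    rw [h3, h2]
    nlinarith [hy1 k, hy0 k]
  have hadjM : ∀ u v, G.Adj u v → (1 : ℝ) ≤ (M u v : ℝ) := by
    intro u v huv
    rw [hG, SimpleGraph.fromRel_adj] at huv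
    have : 0 < M u v := by
      rcases huv.2 with h | h
      · exact h
      · rw [hsymm u v]; exact h
    exact_mod_cast this
  have hoffR : ∀ u v : Fin m, u ≠ v → (0 : ℝ) ≤ (M u v : ℝ) := fun u v h => by
    exact_mod_cast hoff u v h
  -- key concavity inequality along paths
  have key : ∀ u u' w : Fin m, G.Adj w u → G.Adj u u' → w ≠ u' →
      y w + y u' ≤ 2 * y u := by
    intro u u' w hwu huu' hwu'
    have hwne : w ≠ u := hwu.ne
    have hune : u' ≠ u := huu'.ne'
    have hsub : ({w, u'} : Finset (Fin m)) ⊆ Finset.univ.erase u := by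
      intro x hx
      simp only [Finset.mem_insert, Finset.mem_singleton] at hx
      rcases hx with rfl | rfl <;> simp [Finset.mem_erase, hwne, hune]
    have hpair : ∑ l ∈ ({w, u'} : Finset (Fin m)), (M u l : ℝ) * y l
        ≤ ∑ l ∈ Finset.univ.erase u, (M u l : ℝ) * y l := by
      apply Finset.sum_le_sum_of_subset_of_nonneg hsub
      intro l hl _
      exact mul_nonneg (hoffR u l (Ne.symm (Finset.mem_erase.mp hl).1)) (hy0 l)
    rw [Finset.sum_pair hwu'] at hpair
    have hMw : (1 : ℝ) ≤ (M u w : ℝ) := hadjM u w hwu.symm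
    have hMu' : (1 : ℝ) ≤ (M u u' : ℝ) := hadjM u u' huu'
    have h1 : y w ≤ (M u w : ℝ) * y w := le_mul_of_one_le_left (hy0 w) hMw
    have h2 : y u' ≤ (M u u' : ℝ) * y u' := le_mul_of_one_le_left (hy0 u') hMu'
    have := hstar u
    have hbu := hb u
    linarith
  -- main: if b u ≥ 1 and u ≠ v then y v < y u
  have main : ∀ u v : Fin m, u ≠ v → 1 ≤ b u → y v < y u := by
    intro u v huv hbu
    obtain ⟨w⟩ := hconn.preconnected u v
    have hp : w.bypass.IsPath := SimpleGraph.Walk.bypass_isPath w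
    set p := w.bypass with hpdef
    clear_value p
    cases p with
    | nil => exact absurd rfl huv
    | @cons _ u' _ h q =>
        rw [SimpleGraph.Walk.cons_isPath_iff] at hp
        set δ : ℝ := 1 - y u with hδdef
        have hδ : 0 < δ := by simp only [hδdef]; linarith [hy1 u]
        -- first step
        have hmem : u' ∈ Finset.univ.erase u :=
          Finset.mem_erase.mpr ⟨h.ne', Finset.mem_univ u'⟩
        have hsingle : (M u u' : ℝ) * y u' ≤ ∑ l ∈ Finset.univ.erase u, (M u l : ℝ) * y l := by
          apply Finset.single_le_sum (f := fun l => (M u l : ℝ) * y l) _ hmem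
          intro l hl
          exact mul_nonneg (hoffR u l (Ne.symm (Finset.mem_erase.mp hl).1)) (hy0 l)
        have hMu' : (1 : ℝ) ≤ (M u u' : ℝ) := hadjM u u' h
        have h2 : y u' ≤ (M u u' : ℝ) * y u' := le_mul_of_one_le_left (hy0 u') hMu'
        have hstep : y u' ≤ y u - δ := by
          have := hstar u
          simp only [hδdef]
          linarith
        have := walk_aux (le_of_lt hδ) key q hp.1 u h hp.2 hstep
        simp only [hδdef] at this
        linarith
  intro i j hbi hbj
  by_contra hij
  have h1 := main i j hij hbi
  have h2 := main j i (Ne.symm hij) hbj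
  linarith
end

section
/- In the numerical setting for the minimal resolution of a plt surface germ, if b_j ≥ 1 for some index j, then every vertex of the graph G_M has degree at most 2; that is, there do not exist distinct indices k_1,…,k_r, l_1, l_2 (r ≥ 1) with b_{k_1} ≥ 1, M_{k_t k_{t+1}} ≥ 1 for 1 ≤ t ≤ r−1, M_{k_r l_1} ≥ 1 and M_{k_r l_2} ≥ 1. (Geometrically: if some exceptional curve meets the strict transform of the boundary with intersection number at least 1, then the dual graph of the minimal resolution contains no fork.) -/
/-- In the numerical setting for the minimal resolution of a plt surface germ,
if `b j ≥ 1` for some index `j`, then every vertex of the graph `G_M` has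
degree at most 2: there do not exist distinct indices `k 0, …, k (r-1), l₁, l₂`
(`r ≥ 1`) with `b (k 0) ≥ 1`, `M (k t) (k (t+1)) ≥ 1` for `t + 1 < r`,
`M (k (r-1)) l₁ ≥ 1` and `M (k (r-1)) l₂ ≥ 1` (geometrically: if some
exceptional curve meets the strict transform of the boundary with intersection
number at least 1, then the dual graph of the minimal resolution has no fork). -/
theorem stmt_4 (m : ℕ) (hm : 1 ≤ m) (M : Matrix (Fin m) (Fin m) ℤ)
    (hsymm : ∀ i j, M i j = M j i)
    (hnegdef : ∀ x : Fin m → ℝ, x ≠ 0 → ∑ i, ∑ j, x i * (M i j : ℝ) * x j < 0)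
    (hoff : ∀ i j, i ≠ j → 0 ≤ M i j)
    (hdiag : ∀ i, M i i ≤ -2)
    (hconn : (SimpleGraph.fromRel (fun i j => 0 < M i j)).Connected)
    (b : Fin m → ℝ) (hb : ∀ i, 0 ≤ b i)
    (a : Fin m → ℝ)
    (ha : ∀ i, ∑ j, (M i j : ℝ) * a j = -2 - (M i i : ℝ) + b i)
    (haplt : ∀ i, -1 < a i ∧ a i ≤ 0)
    (hex : ∃ j, 1 ≤ b j) :
    ¬ ∃ (r : ℕ) (k : ℕ → Fin m) (l₁ l₂ : Fin m), 1 ≤ r ∧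
      (∀ s t, s < r → t < r → k s = k t → s = t) ∧
      (∀ t, t < r → k t ≠ l₁ ∧ k t ≠ l₂) ∧ l₁ ≠ l₂ ∧
      1 ≤ b (k 0) ∧
      (∀ t, t + 1 < r → 1 ≤ M (k t) (k (t + 1))) ∧
      1 ≤ M (k (r - 1)) l₁ ∧ 1 ≤ M (k (r - 1)) l₂ := by
  -- Key inequality: for every vertex `i` and set `S` of neighbors of `i`,
  -- `b i + 2 * a i ≤ ∑ j in S, a j`.
  have key : ∀ (i : Fin m) (S : Finset (Fin m)), i ∉ S → (∀ j ∈ S, (1:ℝ) ≤ (M i j : ℝ)) →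
      b i + 2 * a i ≤ ∑ j ∈ S, a j := by
    intro i S hiS hS
    have hS' : S ⊆ Finset.univ.erase i := by
      intro j hj
      exact Finset.mem_erase.mpr ⟨fun h => hiS (h ▸ hj), Finset.mem_univ j⟩
    have h1 : ∑ j ∈ Finset.univ.erase i, (M i j : ℝ) * a j
        = (-2 - (M i i : ℝ) + b i) - (M i i : ℝ) * a i := by
      have h := Finset.sum_erase_add Finset.univ (fun j => (M i j : ℝ) * a j)
        (Finset.mem_univ i)
      rw [ha i] at h
      linarith
    have hMi : (M i i : ℝ) ≤ -2 := by exact_mod_cast hdiag i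
    have h2 : b i + 2 * a i ≤ ∑ j ∈ Finset.univ.erase i, (M i j : ℝ) * a j := by
      rw [h1]
      nlinarith [(haplt i).1, hMi]
    have h3 : ∑ j ∈ (Finset.univ.erase i) \ S, (M i j : ℝ) * a j
        + ∑ j ∈ S, (M i j : ℝ) * a j = ∑ j ∈ Finset.univ.erase i, (M i j : ℝ) * a j :=
      Finset.sum_sdiff hS'
    have h4 : ∑ j ∈ (Finset.univ.erase i) \ S, (M i j : ℝ) * a j ≤ 0 := by
      apply Finset.sum_nonpos
      intro j hj
      have hji : j ≠ i := Finset.ne_of_mem_erase (Finset.mem_sdiff.mp hj).1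
      have hM : (0:ℝ) ≤ (M i j : ℝ) := by exact_mod_cast hoff i j (Ne.symm hji)
      exact mul_nonpos_of_nonneg_of_nonpos hM (haplt j).2
    have h5 : ∑ j ∈ S, (M i j : ℝ) * a j ≤ ∑ j ∈ S, a j := by
      apply Finset.sum_le_sum
      intro j hj
      nlinarith [hS j hj, (haplt j).2]
    linarith
  rintro ⟨r, k, l₁, l₂, hr, hinj, hkl, hl, hb0, hpath, hl1, hl2⟩
  obtain ⟨n, rfl⟩ : ∃ n, r = n + 1 := ⟨r - 1, (Nat.succ_pred_eq_of_pos hr).symm⟩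
  have hkne : ∀ s t, s < n + 1 → t < n + 1 → s ≠ t → k s ≠ k t :=
    fun s t hs ht hst h => hst (hinj s t hs ht h)
  -- neighbor bound from the side of `l₁`, `l₂`:
  have hlb : ∀ l : Fin m, k n ≠ l → (1:ℤ) ≤ M (k n) l → 2 * a l ≤ a (k n) := by
    intro l hkl' hMl
    have hk := key l {k n} (by simp [Ne.symm hkl']) (by
      intro j hj
      rw [Finset.mem_singleton] at hj
      subst hj
      rw [hsymm]
      exact_mod_cast hMl)
    rw [Finset.sum_singleton] at hk
    have := hb l
    linarith
  have hrl : n + 1 - 1 = n := by omega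
  rw [hrl] at hl1 hl2
  have hal1 : 2 * a l₁ ≤ a (k n) := hlb l₁ (hkl n (by omega)).1 hl1
  have hal2 : 2 * a l₂ ≤ a (k n) := hlb l₂ (hkl n (by omega)).2 hl2
  rcases Nat.eq_zero_or_pos n with hn | hn
  · -- r = 1 : the fork is at `k 0` which meets the boundary
    subst hn
    have hk := key (k 0) {l₁, l₂} (by
        simp only [Finset.mem_insert, Finset.mem_singleton]
        push_neg
        exact ⟨(hkl 0 (by omega)).1, (hkl 0 (by omega)).2⟩)
      (by
        intro j hj
        simp only [Finset.mem_insert, Finset.mem_singleton] at hj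
        rcases hj with rfl | rfl
        · exact_mod_cast hl1
        · exact_mod_cast hl2)
    rw [Finset.sum_pair hl] at hk
    have := (haplt (k 0)).1
    linarith
  · -- r ≥ 2 : chain/convexity argument
    obtain ⟨nn, rfl⟩ : ∃ nn, n = nn + 1 := ⟨n - 1, by omega⟩
    -- differences along the chain are at least `1 + a (k 0) > 0`
    have chain : ∀ t, t < nn + 1 → 1 + a (k 0) ≤ a (k (t + 1)) - a (k t) := by
      intro t
      induction t with
      | zero =>
        intro _
        have hk := key (k 0) {k 1}
          (by simp [hkne 0 1 (by omega) (by omega) (by omega)])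
          (by
            intro j hj
            rw [Finset.mem_singleton] at hj
            subst hj
            exact_mod_cast hpath 0 (by omega))
        rw [Finset.sum_singleton] at hk
        linarith
      | succ t ih =>
        intro ht
        have ih' := ih (by omega)
        have hne1 : k (t + 1) ≠ k t := hkne (t + 1) t (by omega) (by omega) (by omega)
        have hne2 : k (t + 1) ≠ k (t + 2) := hkne (t + 1) (t + 2) (by omega) (by omega) (by omega)
        have hne3 : k t ≠ k (t + 2) := hkne t (t + 2) (by omega) (by omega) (by omega)
        have hk := key (k (t + 1)) {k t, k (t + 2)}
          (by
            simp only [Finset.mem_insert, Finset.mem_singleton]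
            push_neg
            exact ⟨hne1, hne2⟩)
          (by
            intro j hj
            simp only [Finset.mem_insert, Finset.mem_singleton] at hj
            rcases hj with rfl | rfl
            · rw [hsymm]
              exact_mod_cast hpath t (by omega)
            · exact_mod_cast hpath (t + 1) (by omega))
        rw [Finset.sum_pair hne3] at hk
        have := hb (k (t + 1))
        linarith
    -- the fork inequality at `k (nn + 1)`
    have hne1 : k (nn + 1) ≠ k nn := hkne (nn + 1) nn (by omega) (by omega) (by omega)
    have hknl1 : k nn ≠ l₁ := (hkl nn (by omega)).1
    have hknl2 : k nn ≠ l₂ := (hkl nn (by omega)).2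
    have hfork := key (k (nn + 1)) (insert (k nn) {l₁, l₂})
      (by
        simp only [Finset.mem_insert, Finset.mem_singleton]
        push_neg
        exact ⟨hne1, (hkl (nn + 1) (by omega)).1, (hkl (nn + 1) (by omega)).2⟩)
      (by
        intro j hj
        simp only [Finset.mem_insert, Finset.mem_singleton] at hj
        rcases hj with rfl | rfl | rfl
        · rw [hsymm]
          exact_mod_cast hpath nn (by omega)
        · exact_mod_cast hl1
        · exact_mod_cast hl2)
    rw [Finset.sum_insert (by
        simp only [Finset.mem_insert, Finset.mem_singleton]
        push_neg
        exact ⟨hknl1, hknl2⟩), Finset.sum_pair hl] at hfork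
    have hlast := chain nn (by omega)
    have := (haplt (k 0)).1
    have := hb (k (nn + 1))
    linarith
end

section
/- In the numerical setting for the minimal resolution of a plt surface germ, if b_i ≥ 1 for some index i, then G_M is a path and i is an endpoint of this path: there is an enumeration i_1,…,i_m of {1,…,m} such that the edges of G_M are exactly {i_t, i_{t+1}} for 1 ≤ t ≤ m−1, and i = i_1 or i = i_m. (Geometrically: if some prime exceptional divisor F of the minimal resolution of a plt surface germ (X∋x,B) satisfies B_Y·F ≥ 1, then X∋x is an A-type singularity and F is a tail of the dual graph of the minimal resolution.) -/
/-- In the numerical setting for the minimal resolution of a plt surface germ,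
if `b i ≥ 1` for some index `i`, then `G_M` is a path and `i` is an endpoint:
there is an enumeration `e` of the indices such that the edges of `G_M` are
exactly the consecutive pairs of the enumeration, and `i` is the first or last
vertex (geometrically: `X ∋ x` is an `A`-type singularity and `F` is a tail of
the dual graph of the minimal resolution). -/
theorem stmt_5 (m : ℕ) (hm : 1 ≤ m) (M : Matrix (Fin m) (Fin m) ℤ)
    (hsymm : ∀ i j, M i j = M j i)
    (hnegdef : ∀ x : Fin m → ℝ, x ≠ 0 → ∑ i, ∑ j, x i * (M i j : ℝ) * x j < 0)
    (hoff : ∀ i j, i ≠ j → 0 ≤ M i j)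
    (hdiag : ∀ i, M i i ≤ -2)
    (hconn : (SimpleGraph.fromRel (fun i j => 0 < M i j)).Connected)
    (b : Fin m → ℝ) (hb : ∀ i, 0 ≤ b i)
    (a : Fin m → ℝ)
    (ha : ∀ i, ∑ j, (M i j : ℝ) * a j = -2 - (M i i : ℝ) + b i)
    (haplt : ∀ i, -1 < a i ∧ a i ≤ 0)
    (i : Fin m) (hbi : 1 ≤ b i) :
    ∃ e : Fin m → Fin m, Function.Bijective e ∧
      (∀ p q : Fin m, (e p ≠ e q ∧ 0 < M (e p) (e q)) ↔
        (p.val + 1 = q.val ∨ q.val + 1 = p.val)) ∧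
      (e ⟨0, by omega⟩ = i ∨ e ⟨m - 1, by omega⟩ = i) := by
  classical
  set G := SimpleGraph.fromRel (fun i j : Fin m => 0 < M i j) with hG
  have hAdj : ∀ p q : Fin m, G.Adj p q ↔ p ≠ q ∧ 0 < M p q := by
    intro p q
    rw [hG, SimpleGraph.fromRel_adj]
    constructor
    · rintro ⟨hne, h | h⟩
      · exact ⟨hne, h⟩
      · exact ⟨hne, by rw [hsymm]; exact h⟩
    · rintro ⟨hne, h⟩; exact ⟨hne, Or.inl h⟩
  set c : Fin m → ℝ := fun j => -a j with hc
  have hc0 : ∀ j, 0 ≤ c j := fun j => by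
    simp only [hc]; linarith [(haplt j).2]
  have hc1 : ∀ j, c j < 1 := fun j => by
    simp only [hc]; linarith [(haplt j).1]
  -- master inequality
  have master : ∀ j, ∑ k ∈ Finset.univ.erase j, (M j k : ℝ) * c k ≤ 2 * c j - b j := by
    intro j
    have h1 := ha j
    rw [← Finset.add_sum_erase _ (fun k => (M j k : ℝ) * a k) (Finset.mem_univ j)] at h1
    have h2 : ∑ k ∈ Finset.univ.erase j, (M j k : ℝ) * c k
        = (M j j : ℝ) * (a j + 1) + 2 - b j := by
      have : ∑ k ∈ Finset.univ.erase j, (M j k : ℝ) * c k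
          = -∑ k ∈ Finset.univ.erase j, (M j k : ℝ) * a k := by
        rw [← Finset.sum_neg_distrib]
        refine Finset.sum_congr rfl (fun k _ => ?_)
        show (M j k : ℝ) * c k = -((M j k : ℝ) * a k)
        simp only [hc]; ring
      rw [this]; linarith
    rw [h2]
    have hMjj : (M j j : ℝ) ≤ -2 := by exact_mod_cast hdiag j
    have haj : 0 < a j + 1 := by linarith [(haplt j).1]
    have : (M j j : ℝ) * (a j + 1) ≤ -2 * (a j + 1) :=
      mul_le_mul_of_nonneg_right hMjj (le_of_lt haj)
    have hcj : c j = -a j := rfl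
    linarith
  -- lower bounds on the sum over subsets of neighbors
  have sum_ge : ∀ j (S : Finset (Fin m)), (∀ k ∈ S, k ≠ j ∧ 0 < M j k) →
      ∑ k ∈ S, c k ≤ ∑ k ∈ Finset.univ.erase j, (M j k : ℝ) * c k := by
    intro j S hS
    have hsub : S ⊆ Finset.univ.erase j := fun k hk =>
      Finset.mem_erase.2 ⟨(hS k hk).1, Finset.mem_univ k⟩
    calc ∑ k ∈ S, c k ≤ ∑ k ∈ S, (M j k : ℝ) * c k := by
          refine Finset.sum_le_sum (fun k hk => ?_)
          have h1 : (1 : ℝ) ≤ (M j k : ℝ) := by exact_mod_cast (hS k hk).2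
          nlinarith [hc0 k]
      _ ≤ _ := by
          refine Finset.sum_le_sum_of_subset_of_nonneg hsub (fun k hk _ => ?_)
          have hkj : k ≠ j := (Finset.mem_erase.1 hk).1
          have := hoff j k (Ne.symm hkj)
          have h0 : (0:ℝ) ≤ (M j k : ℝ) := by exact_mod_cast this
          exact mul_nonneg h0 (hc0 k)
  have nbr1 : ∀ j p, G.Adj j p → c p ≤ 2 * c j - b j := by
    intro j p hadj
    obtain ⟨hne, hM⟩ := (hAdj j p).1 hadj
    have := sum_ge j {p} (by
      intro k hk
      rw [Finset.mem_singleton] at hk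
      subst hk
      exact ⟨Ne.symm hne, hM⟩)
    rw [Finset.sum_singleton] at this
    linarith [master j]
  have nbr2 : ∀ j p q, G.Adj j p → G.Adj j q → p ≠ q → c p + c q ≤ 2 * c j - b j := by
    intro j p q h1 h2 hpq
    obtain ⟨hne1, hM1⟩ := (hAdj j p).1 h1
    obtain ⟨hne2, hM2⟩ := (hAdj j q).1 h2
    have := sum_ge j {p, q} (by
      intro k hk; rw [Finset.mem_insert, Finset.mem_singleton] at hk
      rcases hk with rfl | rfl
      · exact ⟨Ne.symm hne1, hM1⟩
      · exact ⟨Ne.symm hne2, hM2⟩)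
    rw [Finset.sum_pair hpq] at this
    linarith [master j]
  have nbr3 : ∀ j p q r, G.Adj j p → G.Adj j q → G.Adj j r → p ≠ q → p ≠ r → q ≠ r →
      c p + c q + c r ≤ 2 * c j - b j := by
    intro j p q r h1 h2 h3 hpq hpr hqr
    obtain ⟨hne1, hM1⟩ := (hAdj j p).1 h1
    obtain ⟨hne2, hM2⟩ := (hAdj j q).1 h2
    obtain ⟨hne3, hM3⟩ := (hAdj j r).1 h3
    have hs := sum_ge j {p, q, r} (by
      intro k hk
      simp only [Finset.mem_insert, Finset.mem_singleton] at hk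
      rcases hk with rfl | rfl | rfl
      · exact ⟨Ne.symm hne1, hM1⟩
      · exact ⟨Ne.symm hne2, hM2⟩
      · exact ⟨Ne.symm hne3, hM3⟩)
    have hrw : ∑ k ∈ ({p, q, r} : Finset (Fin m)), c k = c p + c q + c r := by
      rw [Finset.sum_insert (by simp [hpq, hpr]), Finset.sum_pair hqr]
      ring
    rw [hrw] at hs
    linarith [master j]
  -- distance from i
  set d : Fin m → ℕ := fun v => G.dist i v with hd
  have hreach : ∀ v, G.Reachable i v := fun v => hconn.preconnected i v
  have hd_i : d i = 0 := SimpleGraph.dist_self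
  have hd0 : ∀ v, d v = 0 → v = i := by
    intro v hv
    exact ((hreach v).dist_eq_zero_iff.1 hv).symm
  have adj_dist : ∀ u v, G.Adj u v → d v ≤ d u + 1 := by
    intro u v hadj
    have h1 : G.dist u v ≤ 1 := by
      have := SimpleGraph.dist_le (SimpleGraph.Walk.cons hadj SimpleGraph.Walk.nil)
      simpa using this
    calc d v ≤ d u + G.dist u v := hconn.dist_triangle
      _ ≤ d u + 1 := by omega
  have parent : ∀ v, v ≠ i → ∃ p, G.Adj p v ∧ d p + 1 = d v := by
    intro v hv
    obtain ⟨w, hw⟩ := (hreach v).symm.exists_walk_length_eq_dist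
    cases w with
    | nil => exact absurd rfl hv
    | @cons _ p _ hadjvp w' =>
      refine ⟨p, hadjvp.symm, ?_⟩
      have hlen : w'.length = G.dist v i - 1 := by
        simp only [SimpleGraph.Walk.length_cons] at hw; omega
      have hdp : d p ≤ d v - 1 := by
        have h1 : G.dist p i ≤ w'.length := SimpleGraph.dist_le w'
        have h2 : d p = G.dist p i := by rw [hd]; exact SimpleGraph.dist_comm
        have h3 : G.dist v i = d v := by rw [hd]; exact SimpleGraph.dist_comm
        omega
      have hdv1 : d v ≠ 0 := fun h => hv (hd0 v h)
      have := adj_dist p v hadjvp.symm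
      omega
  -- key monotonicity lemma
  have keyM : ∀ n v p, d v = n → G.Adj p v → d p + 1 = d v → c v ≤ c p - (1 - c i) := by
    intro n
    induction n using Nat.strong_induction_on with
    | _ n ih =>
      intro v p hdv hadj hdp
      rcases eq_or_ne (d p) 0 with h0 | h0
      · have hp : p = i := hd0 p h0
        subst hp
        have h1 := nbr1 p v hadj
        linarith
      · obtain ⟨g, hgadj, hgd⟩ := parent p (fun h => h0 (h ▸ hd_i))
        have hgv : g ≠ v := by intro h; subst h; omega
        have h2 := nbr2 p g v hgadj.symm hadj hgv
        have ihg : c p ≤ c g - (1 - c i) :=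
          ih (d p) (by omega) p g rfl hgadj hgd
        linarith [hb p]
  have hL : ∀ v p, G.Adj p v → c p ≤ 2 * c v := by
    intro v p hadj
    have := nbr1 v p hadj.symm
    linarith [hb v]
  -- level uniqueness
  have uniq : ∀ n u v, d u = n → d v = n → u = v := by
    intro n
    induction n using Nat.strong_induction_on with
    | _ n ih =>
      intro u v hu hv
      rcases eq_or_ne n 0 with rfl | hn
      · rw [hd0 u hu, hd0 v hv]
      · by_contra hne
        have hui : u ≠ i := fun h => by subst h; omega
        have hvi : v ≠ i := fun h => by subst h; omega
        obtain ⟨p, hpu, hpd⟩ := parent u hui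
        obtain ⟨q, hqv, hqd⟩ := parent v hvi
        have hpq : p = q := ih (n-1) (by omega) p q (by omega) (by omega)
        subst hpq
        rcases eq_or_ne (d p) 0 with h0 | h0
        · have hp : p = i := hd0 p h0
          subst hp
          have h1 := nbr2 p u v hpu hqv hne
          have h2 := hL u p hpu
          have h3 := hL v p hqv
          linarith [hc1 p]
        · obtain ⟨g, hgadj, hgd⟩ := parent p (fun h => h0 (h ▸ hd_i))
          have hgu : g ≠ u := by intro h; subst h; omega
          have hgv : g ≠ v := by intro h; subst h; omega
          have h1 := nbr3 p g u v hgadj.symm hpu hqv hgu hgv hne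
          have h2 := hL u p hpu
          have h3 := hL v p hqv
          have h4 : c p ≤ c g - (1 - c i) := keyM (d p) p g rfl hgadj hgd
          linarith [hb p, hc1 i]
  have hd_inj : ∀ u v, d u = d v → u = v := fun u v h => uniq (d v) u v h rfl
  -- ancestors exist at every level
  have anc : ∀ k v, d v = k → ∀ t, t ≤ k → ∃ u, d u = t := by
    intro k
    induction k using Nat.strong_induction_on with
    | _ k ih =>
      intro v hv t ht
      rcases eq_or_lt_of_le ht with rfl | hlt
      · exact ⟨v, hv⟩
      · have hvi : v ≠ i := fun h => by subst h; omega
        obtain ⟨p, _, hpd⟩ := parent v hvi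
        exact ih (d p) (by omega) p rfl t (by omega)
  have hdlt : ∀ v, d v < m := by
    intro v
    by_contra h
    push_neg at h
    have hall : ∀ t : Fin (m+1), ∃ u, d u = t.val :=
      fun t => anc (d v) v rfl t.val (by omega)
    choose u hu using hall
    have huinj : Function.Injective u := by
      intro s t hst
      have h1 := hu s
      rw [hst, hu t] at h1
      exact Fin.ext h1.symm
    have := Fintype.card_le_of_injective u huinj
    simp [Fintype.card_fin] at this
  -- the enumeration
  set D : Fin m → Fin m := fun v => ⟨d v, hdlt v⟩ with hD
  have hDinj : Function.Injective D := by
    intro u v h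
    exact hd_inj u v (by simpa [hD, Fin.ext_iff] using h)
  have hDbij : Function.Bijective D := (Finite.injective_iff_bijective).1 hDinj
  set E := Equiv.ofBijective D hDbij with hE
  refine ⟨E.symm, E.symm.bijective, ?_, ?_⟩
  · have hde : ∀ t : Fin m, d (E.symm t) = t.val := by
      intro t
      have : D (E.symm t) = t := E.apply_symm_apply t
      simpa [hD, Fin.ext_iff] using this
    intro p q
    constructor
    · rintro ⟨hne, hM⟩
      have hadj : G.Adj (E.symm p) (E.symm q) := (hAdj _ _).2 ⟨hne, hM⟩
      have h1 := adj_dist (E.symm p) (E.symm q) hadj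
      have h2 := adj_dist (E.symm q) (E.symm p) hadj.symm
      have h3 : d (E.symm p) ≠ d (E.symm q) := fun h => hne (hd_inj _ _ h)
      rw [hde p, hde q] at h1 h2 h3
      omega
    · intro hcase
      have key : ∀ s t : Fin m, s.val + 1 = t.val → G.Adj (E.symm s) (E.symm t) := by
        intro s t hst
        have hti : E.symm t ≠ i := by
          intro h
          have := hde t
          rw [h, hd_i] at this
          omega
        obtain ⟨r, hradj, hrd⟩ := parent (E.symm t) hti
        have hrs : r = E.symm s := hd_inj _ _ (by rw [hde s]; rw [hde t] at hrd; omega)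
        rwa [hrs] at hradj
      rcases hcase with h | h
      · exact (hAdj _ _).1 (key p q h)
      · exact (hAdj _ _).1 (key q p h).symm
  · left
    have h0 : D i = ⟨0, by omega⟩ := by
      simp [hD, Fin.ext_iff, hd_i]
    rw [← h0]
    exact E.symm_apply_apply i
end

section
/- Let m ≥ 3 be an integer and let M be a symmetric m×m integer matrix with M_{i,i+1} = M_{i+1,i} = 1 for 1 ≤ i ≤ m−3, M_{m−2,m−1} = M_{m−1,m−2} = 1, M_{m−2,m} = M_{m,m−2} = 1, all other off-diagonal entries equal to 0, M_{ii} ≤ −2 for every i, M_{m−1,m−1} = M_{m,m} = −2, and M negative definite. Let a ∈ ℝ^m be the unique vector with (Ma)_1 = −1 − M_{11} and (Ma)_i = −2 − M_{ii} for 2 ≤ i ≤ m. Then a_i = −1 for every 1 ≤ i ≤ m−2 and a_{m−1} = a_m = −1/2. (Geometrically: if X∋x is a D_m-type klt surface germ whose minimal resolution has exceptional curves F_1,…,F_m in this D-shaped configuration with F_{m−1}² = F_m² = −2, and E is a prime divisor whose strict transform meets the tail F_1 of the long branch transversally in one point, then K_Y + E_Y + Σ_{i=1}^{m−2} F_i +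 (1/2)(F_{m−1}+F_m) = f*(K_X+E); hence (X∋x, E) is lc but not plt.) -/
private lemma sum_two' {m : ℕ} (f : Fin m → ℝ) (p q : Fin m) (hpq : p ≠ q)
    (h : ∀ j, j ≠ p → j ≠ q → f j = 0) :
    ∑ j, f j = f p + f q := by
  rw [← Finset.sum_subset (Finset.subset_univ ({p, q} : Finset (Fin m)))]
  · rw [Finset.sum_pair hpq]
  · intro x _ hx
    simp only [Finset.mem_insert, Finset.mem_singleton, not_or] at hx
    exact h x hx.1 hx.2

private lemma sum_three' {m : ℕ} (f : Fin m → ℝ) (p q r : Fin m)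
    (hpq : p ≠ q) (hpr : p ≠ r) (hqr : q ≠ r)
    (h : ∀ j, j ≠ p → j ≠ q → j ≠ r → f j = 0) :
    ∑ j, f j = f p + f q + f r := by
  rw [← Finset.sum_subset (Finset.subset_univ ({p, q, r} : Finset (Fin m)))]
  · rw [Finset.sum_insert (by simp [hpq, hpr]), Finset.sum_pair hqr, add_assoc]
  · intro x _ hx
    simp only [Finset.mem_insert, Finset.mem_singleton, not_or] at hx
    exact h x hx.1 hx.2.1 hx.2.2

private lemma sum_four' {m : ℕ} (f : Fin m → ℝ) (p q r s : Fin m)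
    (hpq : p ≠ q) (hpr : p ≠ r) (hps : p ≠ s) (hqr : q ≠ r) (hqs : q ≠ s)
    (hrs : r ≠ s)
    (h : ∀ j, j ≠ p → j ≠ q → j ≠ r → j ≠ s → f j = 0) :
    ∑ j, f j = f p + f q + f r + f s := by
  rw [← Finset.sum_subset (Finset.subset_univ ({p, q, r, s} : Finset (Fin m)))]
  · rw [Finset.sum_insert (by simp [hpq, hpr, hps]),
      Finset.sum_insert (by simp [hqr, hqs]), Finset.sum_pair hrs]
    ring
  · intro x _ hx
    simp only [Finset.mem_insert, Finset.mem_singleton, not_or] at hx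
    exact h x hx.1 hx.2.1 hx.2.2.1 hx.2.2.2

private lemma Meq {m : ℕ} (M : Matrix (Fin m) (Fin m) ℤ) {i j p q : Fin m}
    (hip : (i : ℕ) = (p : ℕ)) (hjq : (j : ℕ) = (q : ℕ)) {c : ℤ}
    (h : M p q = c) : M i j = c := by
  rw [Fin.ext hip, Fin.ext hjq]; exact h

private noncomputable def bvec (m : ℕ) : Fin m → ℝ := fun j => if (j : ℕ) ≤ m - 3 then -1 else -1/2

private lemma bvec_le {m : ℕ} (j : Fin m) (hj : (j : ℕ) ≤ m - 3) : bvec m j = -1 :=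
  if_pos hj

private lemma bvec_gt {m : ℕ} (j : Fin m) (hj : ¬ ((j : ℕ) ≤ m - 3)) : bvec m j = -1/2 :=
  if_neg hj

set_option maxHeartbeats 1000000 in
/-- `D`-type configuration: `M` is the symmetric negative definite intersection
matrix of the curves `F_1, …, F_m` (0-indexed below, so `F_k` has index
`k - 1`), where `F_1 — ⋯ — F_{m-2}` is a chain and `F_{m-1}`, `F_m` are each
attached only to `F_{m-2}`; diagonal entries are `≤ -2`, with the last two
equal to `-2`.  If `a` is the unique vector with `(M a)_1 = -1 - M_{11}` and
`(M a)_i = -2 - M_{ii}` for `i ≥ 2`, then `a_i = -1` for `1 ≤ i ≤ m - 2` and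
`a_{m-1} = a_m = -1/2` (geometrically: for `E` meeting the tail `F_1`
transversally in one point, `K_Y + E_Y + ∑_{i=1}^{m-2} F_i +
(1/2)(F_{m-1} + F_m) = f^*(K_X + E)`, so `(X ∋ x, E)` is lc but not plt). -/
theorem stmt_7 (m : ℕ) (hm : 3 ≤ m) (M : Matrix (Fin m) (Fin m) ℤ)
    (hsymm : ∀ i j, M i j = M j i)
    (hchain : ∀ i j : Fin m, i.val + 1 = j.val → j.val ≤ m - 2 → M i j = 1)
    (hfork : M ⟨m - 3, by omega⟩ ⟨m - 1, by omega⟩ = 1)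
    (hzero : ∀ i j : Fin m, i ≠ j →
      ¬(i.val + 1 = j.val ∧ j.val ≤ m - 2) →
      ¬(j.val + 1 = i.val ∧ i.val ≤ m - 2) →
      ¬(i.val = m - 3 ∧ j.val = m - 1) →
      ¬(j.val = m - 3 ∧ i.val = m - 1) → M i j = 0)
    (hdiag : ∀ i, M i i ≤ -2)
    (hdiag1 : M ⟨m - 2, by omega⟩ ⟨m - 2, by omega⟩ = -2)
    (hdiag2 : M ⟨m - 1, by omega⟩ ⟨m - 1, by omega⟩ = -2)
    (hnegdef : ∀ x : Fin m → ℝ, x ≠ 0 → ∑ i, ∑ j, x i * (M i j : ℝ) * x j < 0)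
    (a : Fin m → ℝ)
    (ha0 : ∑ j, (M ⟨0, by omega⟩ j : ℝ) * a j
      = -1 - (M ⟨0, by omega⟩ ⟨0, by omega⟩ : ℝ))
    (ha : ∀ i : Fin m, i.val ≠ 0 → ∑ j, (M i j : ℝ) * a j = -2 - (M i i : ℝ)) :
    (∀ i : Fin m, i.val ≤ m - 3 → a i = -1) ∧
    a ⟨m - 2, by omega⟩ = -1/2 ∧ a ⟨m - 1, by omega⟩ = -1/2 := by
  have hfork' : ∀ (h1 : m - 3 < m) (h2 : m - 1 < m),
      M ⟨m - 3, h1⟩ ⟨m - 1, h2⟩ = 1 := fun _ _ => hfork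
  have hdiag1' : ∀ h : m - 2 < m, M ⟨m - 2, h⟩ ⟨m - 2, h⟩ = -2 := fun _ => hdiag1
  have hdiag2' : ∀ h : m - 1 < m, M ⟨m - 1, h⟩ ⟨m - 1, h⟩ = -2 := fun _ => hdiag2
  have ha0' : ∀ h : 0 < m, ∑ j, (M ⟨0, h⟩ j : ℝ) * a j
      = -1 - (M ⟨0, h⟩ ⟨0, h⟩ : ℝ) := fun _ => ha0
  have goal' : (∀ i : Fin m, i.val ≤ m - 3 → a i = -1) ∧
      (∀ h : m - 2 < m, a ⟨m - 2, h⟩ = -1/2) ∧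
      (∀ h : m - 1 < m, a ⟨m - 1, h⟩ = -1/2) →
      (∀ i : Fin m, i.val ≤ m - 3 → a i = -1) ∧
      a ⟨m - 2, by omega⟩ = -1/2 ∧ a ⟨m - 1, by omega⟩ = -1/2 :=
    fun ⟨h1, h2, h3⟩ => ⟨h1, h2 _, h3 _⟩
  clear hfork hdiag1 hdiag2 ha0
  apply goal'
  clear goal'
  -- the candidate vector b satisfies the same linear equations
  have key : ∀ i : Fin m, ∑ j, (M i j : ℝ) * bvec m j
      = (if (i : ℕ) = 0 then -1 else -2) - (M i i : ℝ) := by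
    intro i
    rcases Nat.lt_or_ge (i : ℕ) (m - 3) with hlt | hge
    · rcases Nat.eq_zero_or_pos (i : ℕ) with h0 | hpos
      · -- i = 0 < m - 3, so m ≥ 4 : neighbors {1}
        have hm4 : 4 ≤ m := by omega
        rw [sum_two' (fun j => (M i j : ℝ) * bvec m j) i ⟨1, by omega⟩ (Fin.ne_of_val_ne (by first | omega | (simp only [Fin.val_mk]; omega) | simp only [Fin.val_mk]))]
        · have e1 : M i ⟨1, by omega⟩ = 1 := by
            refine hchain _ _ ?_ ?_ <;> first | omega | (simp only [Fin.val_mk]; omega) | simp only [Fin.val_mk]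
          rw [e1, bvec_le i (by first | omega | (simp only [Fin.val_mk]; omega) | simp only [Fin.val_mk]), bvec_le ⟨1, by omega⟩ (by first | omega | (simp only [Fin.val_mk]; omega) | simp only [Fin.val_mk]), if_pos h0]
          push_cast
          ring
        · intro j hji hj1
          have hji' : (j : ℕ) ≠ (i : ℕ) := fun h => hji (Fin.ext h)
          have hj1' : (j : ℕ) ≠ 1 := fun h => hj1 (Fin.ext h)
          have hj : (j : ℕ) < m := j.isLt
          rw [hzero i j (fun h => hji (h ▸ rfl)) (by first | omega | (simp only [Fin.val_mk]; omega) | simp only [Fin.val_mk]) (by first | omega | (simp only [Fin.val_mk]; omega) | simp only [Fin.val_mk])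
            (by first | omega | (simp only [Fin.val_mk]; omega) | simp only [Fin.val_mk]) (by first | omega | (simp only [Fin.val_mk]; omega) | simp only [Fin.val_mk])]
          simp
      · -- 1 ≤ i < m - 3 : neighbors {i-1, i+1}
        rw [sum_three' (fun j => (M i j : ℝ) * bvec m j) ⟨(i : ℕ) - 1, by omega⟩ i ⟨(i : ℕ) + 1, by omega⟩
          (Fin.ne_of_val_ne (by first | omega | (simp only [Fin.val_mk]; omega) | simp only [Fin.val_mk])) (Fin.ne_of_val_ne (by first | omega | (simp only [Fin.val_mk]; omega) | simp only [Fin.val_mk]))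
          (Fin.ne_of_val_ne (by first | omega | (simp only [Fin.val_mk]; omega) | simp only [Fin.val_mk]))]
        · have e1 : M i ⟨(i : ℕ) - 1, by omega⟩ = 1 := by
            rw [hsymm]; refine hchain _ _ ?_ ?_ <;> first | omega | (simp only [Fin.val_mk]; omega) | simp only [Fin.val_mk]
          have e2 : M i ⟨(i : ℕ) + 1, by omega⟩ = 1 := by
            refine hchain _ _ ?_ ?_ <;> first | omega | (simp only [Fin.val_mk]; omega) | simp only [Fin.val_mk]
          rw [e1, e2, bvec_le _ (by first | omega | (simp only [Fin.val_mk]; omega) | simp only [Fin.val_mk]), bvec_le i (by first | omega | (simp only [Fin.val_mk]; omega) | simp only [Fin.val_mk]), bvec_le _ (by first | omega | (simp only [Fin.val_mk]; omega) | simp only [Fin.val_mk]),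
            if_neg (by omega)]
          push_cast
          ring
        · intro j h1 h2 h3
          have h1' : (j : ℕ) ≠ (i : ℕ) - 1 := fun h => h1 (Fin.ext h)
          have h2' : (j : ℕ) ≠ (i : ℕ) := fun h => h2 (Fin.ext h)
          have h3' : (j : ℕ) ≠ (i : ℕ) + 1 := fun h => h3 (Fin.ext h)
          rw [hzero i j (fun h => h2 (h ▸ rfl)) (by first | omega | (simp only [Fin.val_mk]; omega) | simp only [Fin.val_mk]) (by first | omega | (simp only [Fin.val_mk]; omega) | simp only [Fin.val_mk])
            (by first | omega | (simp only [Fin.val_mk]; omega) | simp only [Fin.val_mk]) (by first | omega | (simp only [Fin.val_mk]; omega) | simp only [Fin.val_mk])]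
          simp
    · -- i ≥ m - 3
      rcases Nat.lt_or_ge (m - 3) (i : ℕ) with hgt | hle
      · rcases Nat.lt_or_ge ((i : ℕ)) (m - 2) with h' | h''
        · omega
        rcases Nat.lt_or_ge ((i : ℕ)) (m - 1) with h2 | h3
        · -- i = m - 2 : neighbors {m-3}
          have hi : (i : ℕ) = m - 2 := by omega
          have hieq : i = ⟨m - 2, by omega⟩ := Fin.ext hi
          rw [sum_two' (fun j => (M i j : ℝ) * bvec m j) ⟨m - 3, by omega⟩ i (Fin.ne_of_val_ne (by first | omega | (simp only [Fin.val_mk]; omega) | simp only [Fin.val_mk]))]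
          · have e1 : M i ⟨m - 3, by omega⟩ = 1 := by
              rw [hsymm]; refine hchain _ _ ?_ ?_ <;> first | omega | (simp only [Fin.val_mk]; omega) | simp only [Fin.val_mk]
            have e2 : M i i = -2 :=
              Meq M (by first | omega | (simp only [Fin.val_mk]; omega) | simp only [Fin.val_mk])
                (by first | omega | (simp only [Fin.val_mk]; omega) | simp only [Fin.val_mk])
                (hdiag1' (by omega))
            rw [e1, e2, bvec_le _ (by first | omega | (simp only [Fin.val_mk]; omega) | simp only [Fin.val_mk]), bvec_gt i (by first | omega | (simp only [Fin.val_mk]; omega) | simp only [Fin.val_mk]), if_neg (by omega)]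
            norm_num
          · intro j h1 h2
            have h1' : (j : ℕ) ≠ m - 3 := fun h => h1 (Fin.ext h)
            have h2' : (j : ℕ) ≠ (i : ℕ) := fun h => h2 (Fin.ext h)
            have hj : (j : ℕ) < m := j.isLt
            rw [hzero i j (fun h => h2 (h ▸ rfl)) (by first | omega | (simp only [Fin.val_mk]; omega) | simp only [Fin.val_mk]) (by first | omega | (simp only [Fin.val_mk]; omega) | simp only [Fin.val_mk])
              (by first | omega | (simp only [Fin.val_mk]; omega) | simp only [Fin.val_mk]) (by first | omega | (simp only [Fin.val_mk]; omega) | simp only [Fin.val_mk])]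
            simp
        · -- i = m - 1 : neighbors {m-3}
          have hi : (i : ℕ) = m - 1 := by omega
          have hieq : i = ⟨m - 1, by omega⟩ := Fin.ext hi
          rw [sum_two' (fun j => (M i j : ℝ) * bvec m j) ⟨m - 3, by omega⟩ i (Fin.ne_of_val_ne (by first | omega | (simp only [Fin.val_mk]; omega) | simp only [Fin.val_mk]))]
          · have h1 : m - 3 < m := by omega
            have h2 : m - 1 < m := by omega
            have base : M ⟨m - 1, h2⟩ ⟨m - 3, h1⟩ = 1 := by
              rw [hsymm]; exact hfork' h1 h2
            have e1 : M i ⟨m - 3, by omega⟩ = 1 :=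
              Meq M (by first | omega | (simp only [Fin.val_mk]; omega) | simp only [Fin.val_mk])
                (by first | omega | (simp only [Fin.val_mk]; omega) | simp only [Fin.val_mk]) base
            have e2 : M i i = -2 :=
              Meq M (by first | omega | (simp only [Fin.val_mk]; omega) | simp only [Fin.val_mk])
                (by first | omega | (simp only [Fin.val_mk]; omega) | simp only [Fin.val_mk]) (hdiag2' h2)
            rw [e1, e2, bvec_le _ (by first | omega | (simp only [Fin.val_mk]; omega) | simp only [Fin.val_mk]), bvec_gt i (by first | omega | (simp only [Fin.val_mk]; omega) | simp only [Fin.val_mk]), if_neg (by omega)]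
            norm_num
          · intro j h1 h2
            have h1' : (j : ℕ) ≠ m - 3 := fun h => h1 (Fin.ext h)
            have h2' : (j : ℕ) ≠ (i : ℕ) := fun h => h2 (Fin.ext h)
            have hj : (j : ℕ) < m := j.isLt
            rw [hzero i j (fun h => h2 (h ▸ rfl)) (by first | omega | (simp only [Fin.val_mk]; omega) | simp only [Fin.val_mk]) (by first | omega | (simp only [Fin.val_mk]; omega) | simp only [Fin.val_mk])
              (by first | omega | (simp only [Fin.val_mk]; omega) | simp only [Fin.val_mk]) (by first | omega | (simp only [Fin.val_mk]; omega) | simp only [Fin.val_mk])]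
            simp
      · -- i = m - 3 : the fork node
        have hi : (i : ℕ) = m - 3 := by omega
        have hieq : i = ⟨m - 3, by omega⟩ := Fin.ext hi
        rcases Nat.eq_or_lt_of_le hm with hm3 | hm4
        · -- m = 3 : i = 0, neighbors {1, 2}
          have hm3' : m = 3 := hm3.symm
          rw [sum_three' (fun j => (M i j : ℝ) * bvec m j) i ⟨1, by omega⟩ ⟨2, by omega⟩
            (Fin.ne_of_val_ne (by first | omega | (simp only [Fin.val_mk]; omega) | simp only [Fin.val_mk])) (Fin.ne_of_val_ne (by first | omega | (simp only [Fin.val_mk]; omega) | simp only [Fin.val_mk]))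
            (Fin.ne_of_val_ne (by first | omega | (simp only [Fin.val_mk]; omega) | simp only [Fin.val_mk]))]
          · have e1 : M i ⟨1, by omega⟩ = 1 := by
              refine hchain _ _ ?_ ?_ <;> first | omega | (simp only [Fin.val_mk]; omega) | simp only [Fin.val_mk]
            have e2 : M i ⟨2, by omega⟩ = 1 :=
              Meq M (by first | omega | (simp only [Fin.val_mk]; omega) | simp only [Fin.val_mk])
                (by first | omega | (simp only [Fin.val_mk]; omega) | simp only [Fin.val_mk])
                (hfork' (by omega) (by omega))
            rw [e1, e2, bvec_le i (by first | omega | (simp only [Fin.val_mk]; omega) | simp only [Fin.val_mk]), bvec_gt ⟨1, by omega⟩ (by first | omega | (simp only [Fin.val_mk]; omega) | simp only [Fin.val_mk]),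
              bvec_gt ⟨2, by omega⟩ (by first | omega | (simp only [Fin.val_mk]; omega) | simp only [Fin.val_mk]), if_pos (by omega)]
            push_cast
            ring
          · intro j h1 h2 h3
            exfalso
            have h1' : (j : ℕ) ≠ (i : ℕ) := fun h => h1 (Fin.ext h)
            have h2' : (j : ℕ) ≠ 1 := fun h => h2 (Fin.ext h)
            have h3' : (j : ℕ) ≠ 2 := fun h => h3 (Fin.ext h)
            have hj : (j : ℕ) < m := j.isLt
            omega
        · -- m ≥ 4 : neighbors {m-4, m-2, m-1}
          rw [sum_four' (fun j => (M i j : ℝ) * bvec m j) ⟨m - 4, by omega⟩ i ⟨m - 2, by omega⟩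
            ⟨m - 1, by omega⟩
            (Fin.ne_of_val_ne (by first | omega | (simp only [Fin.val_mk]; omega) | simp only [Fin.val_mk])) (Fin.ne_of_val_ne (by first | omega | (simp only [Fin.val_mk]; omega) | simp only [Fin.val_mk]))
            (Fin.ne_of_val_ne (by first | omega | (simp only [Fin.val_mk]; omega) | simp only [Fin.val_mk])) (Fin.ne_of_val_ne (by first | omega | (simp only [Fin.val_mk]; omega) | simp only [Fin.val_mk]))
            (Fin.ne_of_val_ne (by first | omega | (simp only [Fin.val_mk]; omega) | simp only [Fin.val_mk])) (Fin.ne_of_val_ne (by first | omega | (simp only [Fin.val_mk]; omega) | simp only [Fin.val_mk]))]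
          · have e1 : M i ⟨m - 4, by omega⟩ = 1 := by
              rw [hsymm]; refine hchain _ _ ?_ ?_ <;> first | omega | (simp only [Fin.val_mk]; omega) | simp only [Fin.val_mk]
            have e2 : M i ⟨m - 2, by omega⟩ = 1 := by
              refine hchain _ _ ?_ ?_ <;> first | omega | (simp only [Fin.val_mk]; omega) | simp only [Fin.val_mk]
            have e3 : M i ⟨m - 1, by omega⟩ = 1 :=
              Meq M (by first | omega | (simp only [Fin.val_mk]; omega) | simp only [Fin.val_mk])
                (by first | omega | (simp only [Fin.val_mk]; omega) | simp only [Fin.val_mk])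
                (hfork' (by omega) (by omega))
            rw [e1, e2, e3, bvec_le _ (by first | omega | (simp only [Fin.val_mk]; omega) | simp only [Fin.val_mk]), bvec_le i (by first | omega | (simp only [Fin.val_mk]; omega) | simp only [Fin.val_mk]),
              bvec_gt ⟨m - 2, by omega⟩ (by first | omega | (simp only [Fin.val_mk]; omega) | simp only [Fin.val_mk]), bvec_gt ⟨m - 1, by omega⟩
              (by first | omega | (simp only [Fin.val_mk]; omega) | simp only [Fin.val_mk]), if_neg (by omega)]
            push_cast
            ring
          · intro j h1 h2 h3 h4
            have h1' : (j : ℕ) ≠ m - 4 := fun h => h1 (Fin.ext h)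
            have h2' : (j : ℕ) ≠ (i : ℕ) := fun h => h2 (Fin.ext h)
            have h3' : (j : ℕ) ≠ m - 2 := fun h => h3 (Fin.ext h)
            have h4' : (j : ℕ) ≠ m - 1 := fun h => h4 (Fin.ext h)
            rw [hzero i j (fun h => h2 (h ▸ rfl)) (by first | omega | (simp only [Fin.val_mk]; omega) | simp only [Fin.val_mk]) (by first | omega | (simp only [Fin.val_mk]; omega) | simp only [Fin.val_mk])
              (by first | omega | (simp only [Fin.val_mk]; omega) | simp only [Fin.val_mk]) (by first | omega | (simp only [Fin.val_mk]; omega) | simp only [Fin.val_mk])]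
            simp
  -- the difference d = a - b is in the kernel of M
  have hMd : ∀ i : Fin m, ∑ j, (M i j : ℝ) * (a j - bvec m j) = 0 := by
    intro i
    have hsplit : ∑ j, (M i j : ℝ) * (a j - bvec m j)
        = ∑ j, (M i j : ℝ) * a j - ∑ j, (M i j : ℝ) * bvec m j := by
      rw [← Finset.sum_sub_distrib]
      exact Finset.sum_congr rfl fun j _ => by ring
    rw [hsplit, key i]
    by_cases h0 : (i : ℕ) = 0
    · have hieq : i = ⟨0, by omega⟩ := Fin.ext h0
      rw [hieq, ha0' (by omega), if_pos (by omega)]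
      ring
    · rw [ha i h0, if_neg h0]
      ring
  -- negative definiteness forces d = 0
  have hab : ∀ j, a j = bvec m j := by
    by_contra hne
    push_neg at hne
    have hdne : (fun j => a j - bvec m j) ≠ 0 := by
      obtain ⟨j, hj⟩ := hne
      intro h
      exact hj (by have := congrFun h j; simpa [sub_eq_zero] using this)
    have hneg := hnegdef _ hdne
    have hzero' : ∑ i, ∑ j, (a i - bvec m i) * (M i j : ℝ) * (a j - bvec m j) = 0 := by
      have : ∀ i : Fin m, ∑ j, (a i - bvec m i) * (M i j : ℝ) * (a j - bvec m j)
          = (a i - bvec m i) * ∑ j, (M i j : ℝ) * (a j - bvec m j) := by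
        intro i
        rw [Finset.mul_sum]
        exact Finset.sum_congr rfl fun j _ => by ring
      rw [Finset.sum_congr rfl fun i _ => this i]
      simp [hMd]
    rw [hzero'] at hneg
    exact absurd hneg (lt_irrefl 0)
  refine ⟨fun i hi => ?_, fun h => ?_, fun h => ?_⟩
  · rw [hab i, bvec_le i hi]
  · rw [hab _, bvec_gt _ (by first | omega | (simp only [Fin.val_mk]; omega) | simp only [Fin.val_mk])]
  · rw [hab _, bvec_gt _ (by first | omega | (simp only [Fin.val_mk]; omega) | simp only [Fin.val_mk])]
end

section
/- In the numerical fork setting for the minimal resolution of a plt surface germ, one has a_0 ≤ a_i for every i ∈ {1,…,m₁}. (Geometrically: the log discrepancy a(F_0, X, B) of the fork F_0 of the dual graph of the minimal resolution of the plt germ (X∋x,B) is at most the log discrepancy a(F_i, X, B) of every exceptional curve F_i on the branch F_1,…,F_{m₁}.) -/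
/-- Adjacency relation on the indices `{0, 1, …, m}` of the fork-shaped dual
graph with fork `0` and the three branches `1, …, m₁`; `m₁+1, …, m₂`;
`m₂+1, …, m`: the fork is joined to the first vertex of each branch, and each
branch is a chain. -/
def forkAdj (m₁ m₂ m : ℕ) (i j : ℕ) : Prop :=
  (i = 0 ∧ (j = 1 ∨ j = m₁ + 1 ∨ j = m₂ + 1)) ∨
  (j = 0 ∧ (i = 1 ∨ i = m₁ + 1 ∨ i = m₂ + 1)) ∨
  (i + 1 = j ∧ ((1 ≤ i ∧ i + 1 ≤ m₁) ∨ (m₁ + 1 ≤ i ∧ i + 1 ≤ m₂) ∨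
    (m₂ + 1 ≤ i ∧ i + 1 ≤ m))) ∨
  (j + 1 = i ∧ ((1 ≤ j ∧ j + 1 ≤ m₁) ∨ (m₁ + 1 ≤ j ∧ j + 1 ≤ m₂) ∨
    (m₂ + 1 ≤ j ∧ j + 1 ≤ m)))

private lemma stmt8_row {n : ℕ} (M : Matrix (Fin n) (Fin n) ℤ) (a : Fin n → ℝ) (i : Fin n)
    (N : Finset (Fin n)) (hiN : i ∉ N)
    (h1 : ∀ j ∈ N, M i j = 1)
    (h0 : ∀ j, j ≠ i → j ∉ N → M i j = 0) :
    ∑ j, (M i j : ℝ) * a j = (M i i : ℝ) * a i + ∑ j ∈ N, a j := by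
  rw [← Finset.sum_subset (Finset.subset_univ (insert i N)) (by
    intro j _ hj
    simp only [Finset.mem_insert, not_or] at hj
    rw [h0 j hj.1 hj.2]
    simp)]
  rw [Finset.sum_insert hiN]
  congr 1
  refine Finset.sum_congr rfl fun j hj => ?_
  rw [h1 j hj]
  simp

private lemma stmt8_chain (L : ℕ) (v : ℕ → ℝ)
    (hend : 2 * v L ≤ v (L - 1))
    (hint : ∀ k, 1 ≤ k → k < L → 2 * v k - v (k + 1) ≤ v (k - 1)) :
    ∀ n k, k + n = L → 1 ≤ k → ((n : ℝ) + 2) * v k ≤ ((n : ℝ) + 1) * v (k - 1) := by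
  intro n
  induction n with
  | zero =>
    intro k hkL _
    obtain rfl : k = L := by omega
    push_cast
    linarith [hend]
  | succ n ih =>
    intro k hkL hk
    have hA := hint k hk (by omega)
    have hB := ih (k + 1) (by omega) (by omega)
    simp only [Nat.add_sub_cancel] at hB
    have hA' : ((n : ℝ) + 2) * (2 * v k - v (k + 1)) ≤ ((n : ℝ) + 2) * v (k - 1) :=
      mul_le_mul_of_nonneg_left hA (by positivity)
    push_cast
    nlinarith [hA', hB]

/-- In the numerical fork setting for the minimal resolution of a plt surface
germ, `a 0 ≤ a i` for every `i ∈ {1, …, m₁}` (geometrically: the log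
discrepancy of the fork `F_0` is at most that of every exceptional curve on the
branch `F_1, …, F_{m₁}`). -/
theorem stmt_8 (m₁ m₂ m : ℕ) (h1 : 0 < m₁) (h2 : m₁ < m₂) (h3 : m₂ < m)
    (M : Matrix (Fin (m + 1)) (Fin (m + 1)) ℤ)
    (hsymm : ∀ i j, M i j = M j i)
    (hadj : ∀ i j : Fin (m + 1), forkAdj m₁ m₂ m i.val j.val → M i j = 1)
    (hnadj : ∀ i j : Fin (m + 1), i ≠ j → ¬ forkAdj m₁ m₂ m i.val j.val →
      M i j = 0)
    (hdiag : ∀ i, M i i ≤ -2)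
    (hnegdef : ∀ x : Fin (m + 1) → ℝ, x ≠ 0 →
      ∑ i, ∑ j, x i * (M i j : ℝ) * x j < 0)
    (b : Fin (m + 1) → ℝ) (hb : ∀ i, 0 ≤ b i)
    (a : Fin (m + 1) → ℝ)
    (ha : ∀ i, ∑ j, (M i j : ℝ) * a j = -2 - (M i i : ℝ) + b i)
    (haplt : ∀ i, -1 < a i ∧ a i ≤ 0) :
    ∀ i : Fin (m + 1), 1 ≤ i.val → i.val ≤ m₁ → a 0 ≤ a i := by
  set V : ℕ → Fin (m + 1) := fun k => ⟨min k m, by omega⟩ with hV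
  have hVval : ∀ k, k ≤ m → (V k).val = k := by
    intro k hk
    simp only [hV]
    omega
  have hVne : ∀ p q : ℕ, p ≤ m → q ≤ m → p ≠ q → V p ≠ V q := by
    intro p q hp hq hpq h
    exact hpq (by rw [← hVval p hp, ← hVval q hq, h])
  have hV0 : V 0 = 0 := by
    apply Fin.ext
    rw [hVval 0 (by omega), Fin.val_zero]
  -- row equation for a vertex with prescribed neighbor set
  have rowEq : ∀ (i : Fin (m + 1)) (N : Finset (Fin (m + 1))), i ∉ N →
      (∀ j ∈ N, forkAdj m₁ m₂ m i.val j.val) →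
      (∀ j : Fin (m + 1), forkAdj m₁ m₂ m i.val j.val → j ∈ N) →
      (M i i : ℝ) * a i + ∑ j ∈ N, a j = -2 - (M i i : ℝ) + b i := by
    intro i N hiN hmem hrev
    have h := ha i
    rwa [stmt8_row M a i N hiN (fun j hj => hadj i j (hmem j hj))
      (fun j hji hjN => hnadj i j (Ne.symm hji) (fun hA => hjN (hrev j hA)))] at h
  -- inequality at a vertex of degree 1
  have vend : ∀ kk pp : ℕ, kk ≤ m → pp ≤ m → pp ≠ kk →
      forkAdj m₁ m₂ m kk pp →
      (∀ t, t ≤ m → forkAdj m₁ m₂ m kk t → t = pp) →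
      2 * a (V kk) ≤ a (V pp) := by
    intro kk pp hkk hpp hne hadjp huniq
    have hkv := hVval kk hkk
    have hpv := hVval pp hpp
    have hiN : V kk ∉ ({V pp} : Finset (Fin (m + 1))) := by
      simp only [Finset.mem_singleton]
      exact hVne kk pp hkk hpp (Ne.symm hne)
    have heq := rowEq (V kk) {V pp} hiN
      (by
        intro j hj
        simp only [Finset.mem_singleton] at hj
        subst hj
        rw [hkv, hpv]
        exact hadjp)
      (by
        intro j hA
        rw [hkv] at hA
        have hjm : j.val ≤ m := Nat.lt_succ_iff.mp j.isLt
        have ht := huniq j.val hjm hA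
        simp only [Finset.mem_singleton]
        exact Fin.ext (by rw [hpv]; exact ht)
      )
    rw [Finset.sum_singleton] at heq
    have hc : (M (V kk) (V kk) : ℝ) ≤ -2 := by exact_mod_cast hdiag (V kk)
    have hg1 := (haplt (V kk)).1
    nlinarith [heq, hb (V kk), mul_nonneg
      (show (0 : ℝ) ≤ -(M (V kk) (V kk) : ℝ) - 2 by linarith)
      (show (0 : ℝ) ≤ 1 + a (V kk) by linarith)]
  -- inequality at a vertex of degree 2
  have vint : ∀ kk pp qq : ℕ, kk ≤ m → pp ≤ m → qq ≤ m → pp ≠ kk → qq ≠ kk → pp ≠ qq →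
      forkAdj m₁ m₂ m kk pp → forkAdj m₁ m₂ m kk qq →
      (∀ t, t ≤ m → forkAdj m₁ m₂ m kk t → t = pp ∨ t = qq) →
      2 * a (V kk) - a (V qq) ≤ a (V pp) := by
    intro kk pp qq hkk hpp hqq hpk hqk hpq hadjp hadjq huniq
    have hkv := hVval kk hkk
    have hpv := hVval pp hpp
    have hqv := hVval qq hqq
    have hpqf : V pp ≠ V qq := hVne pp qq hpp hqq hpq
    have hiN : V kk ∉ ({V pp, V qq} : Finset (Fin (m + 1))) := by
      simp only [Finset.mem_insert, Finset.mem_singleton]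
      push_neg
      exact ⟨fun h => hpk (by rw [← hkv, ← hpv, h]) |>.elim, fun h => hqk (by rw [← hkv, ← hqv, h]) |>.elim⟩
    have heq := rowEq (V kk) {V pp, V qq} hiN
      (by
        intro j hj
        simp only [Finset.mem_insert, Finset.mem_singleton] at hj
        rcases hj with rfl | rfl
        · rw [hkv, hpv]; exact hadjp
        · rw [hkv, hqv]; exact hadjq)
      (by
        intro j hA
        rw [hkv] at hA
        have hjm : j.val ≤ m := Nat.lt_succ_iff.mp j.isLt
        simp only [Finset.mem_insert, Finset.mem_singleton]
        rcases huniq j.val hjm hA with h | h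
        · exact Or.inl (Fin.ext (by rw [hpv]; exact h))
        · exact Or.inr (Fin.ext (by rw [hqv]; exact h)))
    rw [Finset.sum_pair hpqf] at heq
    have hc : (M (V kk) (V kk) : ℝ) ≤ -2 := by exact_mod_cast hdiag (V kk)
    have hg1 := (haplt (V kk)).1
    nlinarith [heq, hb (V kk), mul_nonneg
      (show (0 : ℝ) ≤ -(M (V kk) (V kk) : ℝ) - 2 by linarith)
      (show (0 : ℝ) ≤ 1 + a (V kk) by linarith)]
  -- the fork inequality
  have hfork : 2 * a (V 0) - a (V (m₁ + 1)) - a (V (m₂ + 1)) ≤ a (V 1) := by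
    have hne12 : V 1 ≠ V (m₁ + 1) := hVne 1 (m₁ + 1) (by omega) (by omega) (by omega)
    have hne13 : V 1 ≠ V (m₂ + 1) := hVne 1 (m₂ + 1) (by omega) (by omega) (by omega)
    have hne23 : V (m₁ + 1) ≠ V (m₂ + 1) := hVne (m₁ + 1) (m₂ + 1) (by omega) (by omega) (by omega)
    have hiN : V 0 ∉ ({V 1, V (m₁ + 1), V (m₂ + 1)} : Finset (Fin (m + 1))) := by
      simp only [Finset.mem_insert, Finset.mem_singleton]
      push_neg
      exact ⟨hVne 0 1 (by omega) (by omega) (by omega),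
        hVne 0 (m₁ + 1) (by omega) (by omega) (by omega),
        hVne 0 (m₂ + 1) (by omega) (by omega) (by omega)⟩
    have heq := rowEq (V 0) {V 1, V (m₁ + 1), V (m₂ + 1)} hiN
      (by
        intro j hj
        simp only [Finset.mem_insert, Finset.mem_singleton] at hj
        rw [hVval 0 (by omega)]
        rcases hj with rfl | rfl | rfl
        · rw [hVval 1 (by omega)]; unfold forkAdj; omega
        · rw [hVval (m₁ + 1) (by omega)]; unfold forkAdj; omega
        · rw [hVval (m₂ + 1) (by omega)]; unfold forkAdj; omega)
      (by
        intro j hA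
        rw [hVval 0 (by omega)] at hA
        have hjm : j.val ≤ m := Nat.lt_succ_iff.mp j.isLt
        have ht : j.val = 1 ∨ j.val = m₁ + 1 ∨ j.val = m₂ + 1 := by
          unfold forkAdj at hA; omega
        simp only [Finset.mem_insert, Finset.mem_singleton]
        rcases ht with h | h | h
        · exact Or.inl (Fin.ext (by rw [hVval 1 (by omega)]; exact h))
        · exact Or.inr (Or.inl (Fin.ext (by rw [hVval (m₁ + 1) (by omega)]; exact h)))
        · exact Or.inr (Or.inr (Fin.ext (by rw [hVval (m₂ + 1) (by omega)]; exact h))))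
    rw [Finset.sum_insert (by
        simp only [Finset.mem_insert, Finset.mem_singleton]
        push_neg
        exact ⟨hne12, hne13⟩),
      Finset.sum_pair hne23] at heq
    have hc : (M (V 0) (V 0) : ℝ) ≤ -2 := by exact_mod_cast hdiag (V 0)
    have hg1 := (haplt (V 0)).1
    nlinarith [heq, hb (V 0), mul_nonneg
      (show (0 : ℝ) ≤ -(M (V 0) (V 0) : ℝ) - 2 by linarith)
      (show (0 : ℝ) ≤ 1 + a (V 0) by linarith)]
  -- the branch inequality: (L+1) * a(first) ≤ L * a(fork)
  have branch : ∀ s e : ℕ,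
      (s = 1 ∧ e = m₁ ∨ s = m₁ + 1 ∧ e = m₂ ∨ s = m₂ + 1 ∧ e = m) →
      ((e + 1 - s : ℕ) : ℝ) * a (V s) + a (V s) ≤ ((e + 1 - s : ℕ) : ℝ) * a (V 0) := by
    intro s e hcase
    have hs1 : 1 ≤ s := by omega
    have hse : s ≤ e := by omega
    have hem : e ≤ m := by omega
    set L : ℕ := e + 1 - s with hLdef
    have hL1 : 1 ≤ L := by omega
    set v : ℕ → ℝ := fun j => if j = 0 then a (V 0) else a (V (s + j - 1)) with hv
    have hv0 : v 0 = a (V 0) := by simp [hv]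
    have hvs : v 1 = a (V s) := by
      simp only [hv]
      rw [if_neg (by omega)]
      congr 2 <;> omega
    have hend : 2 * v L ≤ v (L - 1) := by
      have hvL : v L = a (V e) := by
        simp only [hv]
        rw [if_neg (by omega)]
        congr 2 <;> omega
      rcases eq_or_lt_of_le hse with heqse | hlt
      · -- branch of length 1 : e = s, L = 1, previous vertex is the fork 0
        have hL1' : L = 1 := by omega
        rw [hvL, hL1', show (1 : ℕ) - 1 = 0 from rfl, hv0]
        exact vend e 0 hem (by omega) (by omega)
          (by unfold forkAdj; omega)
          (by intro t ht hA; unfold forkAdj at hA; omega)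
      · have hvL1 : v (L - 1) = a (V (e - 1)) := by
          simp only [hv]
          rw [if_neg (by omega)]
          congr 2 <;> omega
        rw [hvL, hvL1]
        exact vend e (e - 1) hem (by omega) (by omega)
          (by unfold forkAdj; omega)
          (by intro t ht hA; unfold forkAdj at hA; omega)
    have hintv : ∀ k, 1 ≤ k → k < L → 2 * v k - v (k + 1) ≤ v (k - 1) := by
      intro k hk1 hkL
      have hvk : v k = a (V (s + k - 1)) := by
        simp only [hv]; rw [if_neg (by omega)]
      have hvk1 : v (k + 1) = a (V (s + k)) := by
        simp only [hv]
        rw [if_neg (by omega)]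
        congr 2 <;> omega
      rcases eq_or_lt_of_le hk1 with hke | hkgt
      · -- k = 1 : vertex s, previous vertex is the fork 0
        have hk1' : k = 1 := hke.symm
        subst hk1'
        rw [hvk, hvk1, show (1 : ℕ) - 1 = 0 from rfl, hv0,
          show s + 1 - 1 = s from by omega]
        exact vint s 0 (s + 1) (by omega) (by omega) (by omega) (by omega) (by omega) (by omega)
          (by unfold forkAdj; omega)
          (by unfold forkAdj; omega)
          (by intro t ht hA; unfold forkAdj at hA; omega)
      · have hvkm : v (k - 1) = a (V (s + k - 2)) := by
          simp only [hv]
          rw [if_neg (by omega)]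
          congr 2 <;> omega
        rw [hvk, hvk1, hvkm]
        exact vint (s + k - 1) (s + k - 2) (s + k) (by omega) (by omega) (by omega)
          (by omega) (by omega) (by omega)
          (by unfold forkAdj; omega)
          (by unfold forkAdj; omega)
          (by intro t ht hA; unfold forkAdj at hA; omega)
    have hchain := stmt8_chain L v hend hintv (L - 1) 1 (by omega) le_rfl
    rw [show (1 : ℕ) - 1 = 0 from rfl, hvs, hv0, Nat.cast_sub hL1] at hchain
    push_cast at hchain ⊢
    linarith [hchain]
  -- the base inequality  a(fork) ≤ a(V 1)
  have base : a (V 0) ≤ a (V 1) := by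
    have hb2 := branch (m₁ + 1) m₂ (by omega)
    have hb3 := branch (m₂ + 1) m (by omega)
    rw [show m₂ + 1 - (m₁ + 1) = m₂ - m₁ from by omega] at hb2
    rw [show m + 1 - (m₂ + 1) = m - m₂ from by omega] at hb3
    set L2 : ℕ := m₂ - m₁ with hL2def
    set L3 : ℕ := m - m₂ with hL3def
    have hL2 : (1 : ℝ) ≤ (L2 : ℝ) := by
      have : 1 ≤ L2 := by omega
      exact_mod_cast this
    have hL3 : (1 : ℝ) ≤ (L3 : ℝ) := by
      have : 1 ≤ L3 := by omega
      exact_mod_cast this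
    have ha0 : a (V 0) ≤ 0 := (haplt (V 0)).2
    set x := a (V 1)
    set y := a (V (m₁ + 1))
    set z := a (V (m₂ + 1))
    set a0 := a (V 0)
    -- hb2 : L2 * y + y ≤ L2 * a0,  hb3 : L3 * z + z ≤ L3 * a0, hfork : 2a0 - y - z ≤ x
    have hP : (0 : ℝ) < ((L2 : ℝ) + 1) * ((L3 : ℝ) + 1) := by positivity
    have key : 0 ≤ ((L2 : ℝ) + 1) * ((L3 : ℝ) + 1) * (x - a0) := by
      nlinarith [mul_le_mul_of_nonneg_left hb2 (show (0 : ℝ) ≤ (L3 : ℝ) + 1 by linarith),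
        mul_le_mul_of_nonneg_left hb3 (show (0 : ℝ) ≤ (L2 : ℝ) + 1 by linarith),
        mul_le_mul_of_nonneg_left hfork (le_of_lt hP),
        mul_nonneg (show (0 : ℝ) ≤ (L2 : ℝ) * (L3 : ℝ) - 1 by nlinarith) (show (0 : ℝ) ≤ -a0 by linarith)]
    nlinarith [key, hP]
  -- monotonicity along the first branch
  have mono : ∀ k, 1 ≤ k → k ≤ m₁ → a (V (k - 1)) ≤ a (V k) := by
    intro k
    induction k with
    | zero => intro h; exact absurd h (by omega)
    | succ k ih =>
      intro _ hk
      rcases Nat.eq_zero_or_pos k with rfl | hkpos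
      · simpa using base
      · have hprev := ih (by omega) (by omega)
        have hstep : 2 * a (V k) - a (V (k + 1)) ≤ a (V (k - 1)) := by
          apply vint k (k - 1) (k + 1) (by omega) (by omega) (by omega) (by omega) (by omega)
            (by omega)
          · unfold forkAdj; omega
          · unfold forkAdj; omega
          · intro t ht hA; unfold forkAdj at hA; omega
        have : a (V k) ≤ a (V (k + 1)) := by linarith
        simpa using this
  have all : ∀ k, 1 ≤ k → k ≤ m₁ → a (V 0) ≤ a (V k) := by
    intro k
    induction k with
    | zero => intro h; exact absurd h (by omega)
    | succ k ih =>
      intro _ hk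
      rcases Nat.eq_zero_or_pos k with rfl | hkpos
      · exact base
      · exact le_trans (ih (by omega) (by omega)) (by simpa using mono (k + 1) (by omega) hk)
  intro i hi1 him
  have hVi : V i.val = i := Fin.ext (hVval i.val (by omega))
  calc a 0 = a (V 0) := by rw [hV0]
    _ ≤ a (V i.val) := all i.val hi1 him
    _ = a i := by rw [hVi]
end

section
/- In the numerical fork setting for the minimal resolution of a plt surface germ, if a_0 = a_l for some l ∈ {1,…,m₁}, then: (a) a_i = a_0 for every 0 ≤ i ≤ l; (b) a_{m₁+1} = a_{m₂+1} = a_0/2; (c) M_{ii} = −2 for every i ∈ {0,1,…,l−1} ∪ {m₁+1, m₂+1}; and (d) either (m₂ = m₁+1 and m = m₂+1), or (b_i = 0, a_i = 0 and M_{ii} = −2 for every i ∈ {0,1,…,m}). (Geometrically: if the log discrepancy of the fork F_0 equals that of some F_l on the first branch, then all F_i with 0 ≤ i ≤ l have equal log discrepancy, the two curves adjacent to the fork on the other branches have log discrepancy 1 + a_0/2, the listed curves have self-intersection −2, and either the second and third branches both have length 1, or B = 0 and X∋x is Du Val.) -/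
lemma fin_sum_two {n : ℕ} (f : Fin n → ℝ) (i p : Fin n) (hip : i ≠ p)
    (h0 : ∀ j, j ≠ i → j ≠ p → f j = 0) : ∑ j, f j = f i + f p := by
  have hsub : ∑ j, f j = ∑ j ∈ ({i, p} : Finset (Fin n)), f j := by
    refine (Finset.sum_subset (Finset.subset_univ _) ?_).symm
    intro j _ hj
    simp only [Finset.mem_insert, Finset.mem_singleton] at hj
    push_neg at hj
    exact h0 j hj.1 hj.2
  rw [hsub, Finset.sum_pair hip]

lemma fin_sum_four {n : ℕ} (f : Fin n → ℝ) (i p q r : Fin n)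
    (hip : i ≠ p) (hiq : i ≠ q) (hir : i ≠ r) (hpq : p ≠ q) (hpr : p ≠ r) (hqr : q ≠ r)
    (h0 : ∀ j, j ≠ i → j ≠ p → j ≠ q → j ≠ r → f j = 0) :
    ∑ j, f j = f i + f p + f q + f r := by
  have hsub : ∑ j, f j = ∑ j ∈ ({i, p, q, r} : Finset (Fin n)), f j := by
    refine (Finset.sum_subset (Finset.subset_univ _) ?_).symm
    intro j _ hj
    simp only [Finset.mem_insert, Finset.mem_singleton] at hj
    push_neg at hj
    exact h0 j hj.1 hj.2.1 hj.2.2.1 hj.2.2.2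
  rw [hsub, Finset.sum_insert (by simp [hip, hiq, hir]),
    Finset.sum_insert (by simp [hpq, hpr]), Finset.sum_pair hqr]
  ring

lemma fin_sum_three {n : ℕ} (f : Fin n → ℝ) (i p q : Fin n)
    (hip : i ≠ p) (hiq : i ≠ q) (hpq : p ≠ q)
    (h0 : ∀ j, j ≠ i → j ≠ p → j ≠ q → f j = 0) :
    ∑ j, f j = f i + f p + f q := by
  have hsub : ∑ j, f j = ∑ j ∈ ({i, p, q} : Finset (Fin n)), f j := by
    refine (Finset.sum_subset (Finset.subset_univ _) ?_).symm
    intro j _ hj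
    simp only [Finset.mem_insert, Finset.mem_singleton] at hj
    push_neg at hj
    exact h0 j hj.1 hj.2.1 hj.2.2
  rw [hsub, Finset.sum_insert (by simp [hip, hiq]), Finset.sum_pair hpq]
  ring

lemma seq_dmono (t : ℕ → ℝ) (K : ℕ)
    (hconv : ∀ k, 1 ≤ k → k ≤ K → 2 * t k ≤ t (k - 1) + t (k + 1)) :
    ∀ k, k ≤ K → t 1 - t 0 ≤ t (k + 1) - t k := by
  intro k
  induction k with
  | zero => intro _; simp
  | succ n ih =>
    intro h
    have hh1 := ih (by omega)
    have hh2 := hconv (n + 1) (by omega) h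
    simp only [Nat.add_sub_cancel] at hh2
    linarith

lemma seq_lower (t : ℕ → ℝ) (K : ℕ)
    (hconv : ∀ k, 1 ≤ k → k ≤ K → 2 * t k ≤ t (k - 1) + t (k + 1)) :
    ∀ k, k ≤ K + 1 → t 0 + k * (t 1 - t 0) ≤ t k := by
  intro k
  induction k with
  | zero => intro _; simp
  | succ n ih =>
    intro h
    have hh1 := ih (by omega)
    have hh2 := seq_dmono t K hconv n (by omega)
    push_cast
    linarith

lemma seq_mono (t : ℕ → ℝ) (K : ℕ)
    (hconv : ∀ k, 1 ≤ k → k ≤ K → 2 * t k ≤ t (k - 1) + t (k + 1))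
    (h01 : t 0 ≤ t 1) :
    ∀ k, k ≤ K + 1 → ∀ j, j ≤ k → t j ≤ t k := by
  intro k
  induction k with
  | zero =>
    intro _ j hj
    have : j = 0 := by omega
    simp [this]
  | succ n ih =>
    intro h j hj
    rcases Nat.eq_or_lt_of_le hj with he | hlt
    · rw [he]
    · have hh1 : t j ≤ t n := ih (by omega) j (by omega)
      have hh2 := seq_dmono t K hconv n (by omega)
      linarith

set_option maxHeartbeats 1000000 in
lemma aux_key1 (m₁ m₂ m : ℕ) (h1 : 0 < m₁) (h2 : m₁ < m₂) (h3 : m₂ < m)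
    (M : Matrix (Fin (m + 1)) (Fin (m + 1)) ℤ)
    (hadj : ∀ i j : Fin (m + 1), forkAdj m₁ m₂ m i.val j.val → M i j = 1)
    (hnadj : ∀ i j : Fin (m + 1), i ≠ j → ¬ forkAdj m₁ m₂ m i.val j.val → M i j = 0)
    (b : Fin (m + 1) → ℝ)
    (a : Fin (m + 1) → ℝ)
    (ha : ∀ i, ∑ j, (M i j : ℝ) * a j = -2 - (M i i : ℝ) + b i) :
  ∀ (i p : ℕ) (hi : i < m + 1) (hp : p < m + 1),
      i ≠ p → forkAdj m₁ m₂ m i p →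
      (∀ j : ℕ, j < m + 1 → j ≠ i → forkAdj m₁ m₂ m i j → j = p) →
      (M ⟨i, hi⟩ ⟨i, hi⟩ : ℝ) * a ⟨i, hi⟩ + a ⟨p, hp⟩
        = -2 - (M ⟨i, hi⟩ ⟨i, hi⟩ : ℝ) + b ⟨i, hi⟩ := by
  intro i p hi hp hip hadjp hsole
  have h0 : ∀ j : Fin (m + 1), j ≠ ⟨i, hi⟩ → j ≠ ⟨p, hp⟩ →
      (M ⟨i, hi⟩ j : ℝ) * a j = 0 := by
    intro j hj1 hj2
    have hji : j.val ≠ i := fun hh => hj1 (Fin.ext hh)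
    have hna : ¬ forkAdj m₁ m₂ m i j.val := fun hadj' =>
      hj2 (Fin.ext (hsole j.val j.isLt hji hadj'))
    rw [hnadj ⟨i, hi⟩ j (Ne.symm hj1) hna]
    simp
  have h2 : ∑ j, (M ⟨i, hi⟩ j : ℝ) * a j
      = (M ⟨i, hi⟩ ⟨i, hi⟩ : ℝ) * a ⟨i, hi⟩
        + (M ⟨i, hi⟩ ⟨p, hp⟩ : ℝ) * a ⟨p, hp⟩ :=
    fin_sum_two _ _ _ (by simp [Fin.ext_iff]; omega) h0
  rw [ha ⟨i, hi⟩, hadj ⟨i, hi⟩ ⟨p, hp⟩ hadjp] at h2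
  push_cast at h2
  linarith

set_option maxHeartbeats 1000000 in
lemma aux_key2 (m₁ m₂ m : ℕ) (h1 : 0 < m₁) (h2 : m₁ < m₂) (h3 : m₂ < m)
    (M : Matrix (Fin (m + 1)) (Fin (m + 1)) ℤ)
    (hadj : ∀ i j : Fin (m + 1), forkAdj m₁ m₂ m i.val j.val → M i j = 1)
    (hnadj : ∀ i j : Fin (m + 1), i ≠ j → ¬ forkAdj m₁ m₂ m i.val j.val → M i j = 0)
    (b : Fin (m + 1) → ℝ)
    (a : Fin (m + 1) → ℝ)
    (ha : ∀ i, ∑ j, (M i j : ℝ) * a j = -2 - (M i i : ℝ) + b i) :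
  ∀ (i p q : ℕ) (hi : i < m + 1) (hp : p < m + 1) (hq : q < m + 1),
      i ≠ p → i ≠ q → p ≠ q → forkAdj m₁ m₂ m i p → forkAdj m₁ m₂ m i q →
      (∀ j : ℕ, j < m + 1 → j ≠ i → forkAdj m₁ m₂ m i j → j = p ∨ j = q) →
      (M ⟨i, hi⟩ ⟨i, hi⟩ : ℝ) * a ⟨i, hi⟩ + a ⟨p, hp⟩ + a ⟨q, hq⟩
        = -2 - (M ⟨i, hi⟩ ⟨i, hi⟩ : ℝ) + b ⟨i, hi⟩ := by
  intro i p q hi hp hq hip hiq hpq hadjp hadjq hsole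
  have h0 : ∀ j : Fin (m + 1), j ≠ ⟨i, hi⟩ → j ≠ ⟨p, hp⟩ → j ≠ ⟨q, hq⟩ →
      (M ⟨i, hi⟩ j : ℝ) * a j = 0 := by
    intro j hj1 hj2 hj3
    have hji : j.val ≠ i := fun hh => hj1 (Fin.ext hh)
    have hna : ¬ forkAdj m₁ m₂ m i j.val := by
      intro hadj'
      rcases hsole j.val j.isLt hji hadj' with hh | hh
      · exact hj2 (Fin.ext hh)
      · exact hj3 (Fin.ext hh)
    rw [hnadj ⟨i, hi⟩ j (Ne.symm hj1) hna]
    simp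
  have h2 : ∑ j, (M ⟨i, hi⟩ j : ℝ) * a j
      = (M ⟨i, hi⟩ ⟨i, hi⟩ : ℝ) * a ⟨i, hi⟩
        + (M ⟨i, hi⟩ ⟨p, hp⟩ : ℝ) * a ⟨p, hp⟩
        + (M ⟨i, hi⟩ ⟨q, hq⟩ : ℝ) * a ⟨q, hq⟩ :=
    fin_sum_three _ _ _ _ (by simp [Fin.ext_iff]; omega)
      (by simp [Fin.ext_iff]; omega) (by simp [Fin.ext_iff]; omega) h0
  rw [ha ⟨i, hi⟩, hadj ⟨i, hi⟩ ⟨p, hp⟩ hadjp, hadj ⟨i, hi⟩ ⟨q, hq⟩ hadjq] at h2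
  push_cast at h2
  linarith

set_option maxHeartbeats 1000000 in
lemma aux_fork (m₁ m₂ m : ℕ) (h1 : 0 < m₁) (h2 : m₁ < m₂) (h3 : m₂ < m)
    (M : Matrix (Fin (m + 1)) (Fin (m + 1)) ℤ)
    (hadj : ∀ i j : Fin (m + 1), forkAdj m₁ m₂ m i.val j.val → M i j = 1)
    (hnadj : ∀ i j : Fin (m + 1), i ≠ j → ¬ forkAdj m₁ m₂ m i.val j.val → M i j = 0)
    (b : Fin (m + 1) → ℝ)
    (a : Fin (m + 1) → ℝ)
    (ha : ∀ i, ∑ j, (M i j : ℝ) * a j = -2 - (M i i : ℝ) + b i) :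
    (M 0 0 : ℝ) * a 0 + a ⟨1, by omega⟩ + a ⟨m₁ + 1, by omega⟩ + a ⟨m₂ + 1, by omega⟩
      = -2 - (M 0 0 : ℝ) + b 0 := by
  have hm1 : m₁ + 1 < m + 1 := by omega
  have hm2 : m₂ + 1 < m + 1 := by omega
  have h1m : 1 < m + 1 := by omega
  show (M 0 0 : ℝ) * a 0 + a ⟨1, h1m⟩ + a ⟨m₁ + 1, hm1⟩ + a ⟨m₂ + 1, hm2⟩
      = -2 - (M 0 0 : ℝ) + b 0
  have h0 : ∀ j : Fin (m + 1), j ≠ 0 → j ≠ ⟨1, h1m⟩ → j ≠ ⟨m₁ + 1, hm1⟩ →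
      j ≠ ⟨m₂ + 1, hm2⟩ → (M 0 j : ℝ) * a j = 0 := by
    intro j hj0 hj1 hj2 hj3
    have hv0 : j.val ≠ 0 := fun hh => hj0 (Fin.ext hh)
    have hv1 : j.val ≠ 1 := fun hh => hj1 (Fin.ext hh)
    have hv2 : j.val ≠ m₁ + 1 := fun hh => hj2 (Fin.ext hh)
    have hv3 : j.val ≠ m₂ + 1 := fun hh => hj3 (Fin.ext hh)
    have hna : ¬ forkAdj m₁ m₂ m (0 : Fin (m + 1)).val j.val := by
      show ¬ forkAdj m₁ m₂ m 0 j.val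
      unfold forkAdj
      omega
    rw [hnadj 0 j (Ne.symm hj0) hna]
    simp
  have h2 : ∑ j, (M 0 j : ℝ) * a j
      = (M 0 0 : ℝ) * a 0 + (M 0 ⟨1, h1m⟩ : ℝ) * a ⟨1, h1m⟩
        + (M 0 ⟨m₁ + 1, hm1⟩ : ℝ) * a ⟨m₁ + 1, hm1⟩
        + (M 0 ⟨m₂ + 1, hm2⟩ : ℝ) * a ⟨m₂ + 1, hm2⟩ :=
    fin_sum_four _ _ _ _ _
      (Fin.ne_of_val_ne (by omega : (0 : ℕ) ≠ 1))
      (Fin.ne_of_val_ne (by omega : (0 : ℕ) ≠ m₁ + 1))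
      (Fin.ne_of_val_ne (by omega : (0 : ℕ) ≠ m₂ + 1))
      (Fin.ne_of_val_ne (by omega : (1 : ℕ) ≠ m₁ + 1))
      (Fin.ne_of_val_ne (by omega : (1 : ℕ) ≠ m₂ + 1))
      (Fin.ne_of_val_ne (by omega : m₁ + 1 ≠ m₂ + 1)) h0
  rw [ha 0,
    hadj 0 ⟨1, h1m⟩ (by show forkAdj m₁ m₂ m 0 1; unfold forkAdj; omega),
    hadj 0 ⟨m₁ + 1, hm1⟩ (by show forkAdj m₁ m₂ m 0 (m₁ + 1); unfold forkAdj; omega),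
    hadj 0 ⟨m₂ + 1, hm2⟩ (by show forkAdj m₁ m₂ m 0 (m₂ + 1); unfold forkAdj; omega)] at h2
  push_cast at h2
  linarith

set_option maxHeartbeats 2000000 in
lemma aux_conv1 (m₁ m₂ m : ℕ) (h1 : 0 < m₁) (h2 : m₁ < m₂) (h3 : m₂ < m)
    (M : Matrix (Fin (m + 1)) (Fin (m + 1)) ℤ)
    (hadj : ∀ i j : Fin (m + 1), forkAdj m₁ m₂ m i.val j.val → M i j = 1)
    (hnadj : ∀ i j : Fin (m + 1), i ≠ j → ¬ forkAdj m₁ m₂ m i.val j.val → M i j = 0)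
    (b : Fin (m + 1) → ℝ)
    (a : Fin (m + 1) → ℝ)
    (ha : ∀ i, ∑ j, (M i j : ℝ) * a j = -2 - (M i i : ℝ) + b i)
    (hdiag : ∀ i, M i i ≤ -2) (hb : ∀ i, 0 ≤ b i)
    (haplt : ∀ i, -1 < a i ∧ a i ≤ 0)
    (t1 : ℕ → ℝ) (ht1 : ∀ k (h : k ≤ m₁), t1 k = a ⟨k, by omega⟩)
    (ht1' : ∀ k, m₁ < k → t1 k = 0) :
  ∀ k, 1 ≤ k → k ≤ m₁ → 2 * t1 k ≤ t1 (k - 1) + t1 (k + 1) := by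
  have hMcast : ∀ i : Fin (m + 1), (M i i : ℝ) ≤ -2 := fun i => by exact_mod_cast hdiag i
  have key1 := aux_key1 m₁ m₂ m h1 h2 h3 M hadj hnadj b a ha
  have key2 := aux_key2 m₁ m₂ m h1 h2 h3 M hadj hnadj b a ha

  intro k hk1 hk2
  have hkm : k < m + 1 := by omega
  have hM' := hMcast ⟨k, hkm⟩
  have ha' := (haplt ⟨k, hkm⟩).1
  have hb' := hb ⟨k, hkm⟩
  have hprod : 0 ≤ (-(M ⟨k, hkm⟩ ⟨k, hkm⟩ : ℝ) - 2) * (1 + a ⟨k, hkm⟩) :=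
    mul_nonneg (by linarith) (by linarith)
  have ep : t1 (k - 1) = a ⟨k - 1, by omega⟩ := ht1 (k - 1) (by omega)
  rcases Nat.lt_or_ge k m₁ with hlt | hge
  · -- interior vertex
    have e := key2 k (k - 1) (k + 1) hkm (by omega) (by omega)
      (by omega) (by omega) (by omega)
      (by unfold forkAdj; omega) (by unfold forkAdj; omega)
      (by intro j hj hjne hadj'; unfold forkAdj at hadj'; omega)
    have eq1 : t1 k = a ⟨k, hkm⟩ := ht1 k hk2
    have eq2 : t1 (k + 1) = a ⟨k + 1, by omega⟩ := ht1 (k + 1) (by omega)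
    rw [eq1, eq2, ep]
    linarith
  · -- end vertex k = m₁
    have hke : k = m₁ := by omega
    have e := key1 k (k - 1) hkm (by omega) (by omega)
      (by unfold forkAdj; omega)
      (by intro j hj hjne hadj'; unfold forkAdj at hadj'; omega)
    have eq1 : t1 k = a ⟨k, hkm⟩ := ht1 k hk2
    have eq2 : t1 (k + 1) = 0 := ht1' (k + 1) (by omega)
    rw [eq1, eq2, ep]
    linarith

set_option maxHeartbeats 2000000 in
lemma aux_conv2 (m₁ m₂ m : ℕ) (h1 : 0 < m₁) (h2 : m₁ < m₂) (h3 : m₂ < m)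
    (M : Matrix (Fin (m + 1)) (Fin (m + 1)) ℤ)
    (hadj : ∀ i j : Fin (m + 1), forkAdj m₁ m₂ m i.val j.val → M i j = 1)
    (hnadj : ∀ i j : Fin (m + 1), i ≠ j → ¬ forkAdj m₁ m₂ m i.val j.val → M i j = 0)
    (b : Fin (m + 1) → ℝ)
    (a : Fin (m + 1) → ℝ)
    (ha : ∀ i, ∑ j, (M i j : ℝ) * a j = -2 - (M i i : ℝ) + b i)
    (hdiag : ∀ i, M i i ≤ -2) (hb : ∀ i, 0 ≤ b i)
    (haplt : ∀ i, -1 < a i ∧ a i ≤ 0)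
    (pn : ℕ) (hpn1 : 1 ≤ pn) (hpn : m₂ = m₁ + pn)
    (t2 : ℕ → ℝ) (ht2z : t2 0 = a 0)
    (ht2 : ∀ k (h1 : 1 ≤ k) (h2 : m₁ + k ≤ m₂), t2 k = a ⟨m₁ + k, by omega⟩)
    (ht2' : ∀ k, 1 ≤ k → m₂ < m₁ + k → t2 k = 0) :
  ∀ k, 1 ≤ k → k ≤ pn → 2 * t2 k ≤ t2 (k - 1) + t2 (k + 1) := by
  have hMcast : ∀ i : Fin (m + 1), (M i i : ℝ) ≤ -2 := fun i => by exact_mod_cast hdiag i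
  have key1 := aux_key1 m₁ m₂ m h1 h2 h3 M hadj hnadj b a ha
  have key2 := aux_key2 m₁ m₂ m h1 h2 h3 M hadj hnadj b a ha

  intro k hk1 hk2
  have hkm : m₁ + k < m + 1 := by omega
  have hM' := hMcast ⟨m₁ + k, hkm⟩
  have ha' := (haplt ⟨m₁ + k, hkm⟩).1
  have hb' := hb ⟨m₁ + k, hkm⟩
  have hprod : 0 ≤ (-(M ⟨m₁ + k, hkm⟩ ⟨m₁ + k, hkm⟩ : ℝ) - 2) * (1 + a ⟨m₁ + k, hkm⟩) :=
    mul_nonneg (by linarith) (by linarith)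
  have eq1 : t2 k = a ⟨m₁ + k, hkm⟩ := ht2 k hk1 (by omega)
  have ez : a ⟨0, by omega⟩ = a 0 := rfl
  rcases Nat.eq_or_lt_of_le hk1 with hk1' | hk1'
  · -- k = 1 : first vertex of the branch, adjacent to the fork
    rcases Nat.lt_or_ge (m₁ + k) m₂ with hlt | hge
    · have e := key2 (m₁ + k) 0 (m₁ + (k + 1)) hkm (by omega) (by omega)
        (by omega) (by omega) (by omega)
        (by unfold forkAdj; omega) (by unfold forkAdj; omega)
        (by intro j hj hjne hadj'; unfold forkAdj at hadj'; omega)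
      have eq0 : t2 (k - 1) = a 0 := by
        have : k - 1 = 0 := by omega
        rw [this, ht2z]
      have eq2 : t2 (k + 1) = a ⟨m₁ + (k + 1), by omega⟩ := ht2 (k + 1) (by omega) (by omega)
      rw [eq0, eq1, eq2]
      linarith [e, ez]
    · -- k = 1 and m₁ + 1 = m₂ : single vertex branch
      have e := key1 (m₁ + k) 0 hkm (by omega) (by omega)
        (by unfold forkAdj; omega)
        (by intro j hj hjne hadj'; unfold forkAdj at hadj'; omega)
      have eq0 : t2 (k - 1) = a 0 := by
        have : k - 1 = 0 := by omega
        rw [this, ht2z]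
      have eq2 : t2 (k + 1) = 0 := ht2' (k + 1) (by omega) (by omega)
      rw [eq0, eq1, eq2]
      linarith [e, ez]
  · -- k ≥ 2 : previous vertex is on the branch
    have ep : t2 (k - 1) = a ⟨m₁ + (k - 1), by omega⟩ := ht2 (k - 1) (by omega) (by omega)
    rcases Nat.lt_or_ge (m₁ + k) m₂ with hlt | hge
    · have e := key2 (m₁ + k) (m₁ + (k - 1)) (m₁ + (k + 1)) hkm (by omega) (by omega)
        (by omega) (by omega) (by omega)
        (by unfold forkAdj; omega) (by unfold forkAdj; omega)
        (by intro j hj hjne hadj'; unfold forkAdj at hadj'; omega)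
      have eq2 : t2 (k + 1) = a ⟨m₁ + (k + 1), by omega⟩ := ht2 (k + 1) (by omega) (by omega)
      rw [ep, eq1, eq2]
      linarith
    · have e := key1 (m₁ + k) (m₁ + (k - 1)) hkm (by omega) (by omega)
        (by unfold forkAdj; omega)
        (by intro j hj hjne hadj'; unfold forkAdj at hadj'; omega)
      have eq2 : t2 (k + 1) = 0 := ht2' (k + 1) (by omega) (by omega)
      rw [ep, eq1, eq2]
      linarith

set_option maxHeartbeats 2000000 in
lemma aux_conv3 (m₁ m₂ m : ℕ) (h1 : 0 < m₁) (h2 : m₁ < m₂) (h3 : m₂ < m)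
    (M : Matrix (Fin (m + 1)) (Fin (m + 1)) ℤ)
    (hadj : ∀ i j : Fin (m + 1), forkAdj m₁ m₂ m i.val j.val → M i j = 1)
    (hnadj : ∀ i j : Fin (m + 1), i ≠ j → ¬ forkAdj m₁ m₂ m i.val j.val → M i j = 0)
    (b : Fin (m + 1) → ℝ)
    (a : Fin (m + 1) → ℝ)
    (ha : ∀ i, ∑ j, (M i j : ℝ) * a j = -2 - (M i i : ℝ) + b i)
    (hdiag : ∀ i, M i i ≤ -2) (hb : ∀ i, 0 ≤ b i)
    (haplt : ∀ i, -1 < a i ∧ a i ≤ 0)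
    (qn : ℕ) (hqn1 : 1 ≤ qn) (hqn : m = m₂ + qn)
    (t3 : ℕ → ℝ) (ht3z : t3 0 = a 0)
    (ht3 : ∀ k (h1 : 1 ≤ k) (h2 : m₂ + k ≤ m), t3 k = a ⟨m₂ + k, by omega⟩)
    (ht3' : ∀ k, 1 ≤ k → m < m₂ + k → t3 k = 0) :
  ∀ k, 1 ≤ k → k ≤ qn → 2 * t3 k ≤ t3 (k - 1) + t3 (k + 1) := by
  have hMcast : ∀ i : Fin (m + 1), (M i i : ℝ) ≤ -2 := fun i => by exact_mod_cast hdiag i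
  have key1 := aux_key1 m₁ m₂ m h1 h2 h3 M hadj hnadj b a ha
  have key2 := aux_key2 m₁ m₂ m h1 h2 h3 M hadj hnadj b a ha

  intro k hk1 hk2
  have hkm : m₂ + k < m + 1 := by omega
  have hM' := hMcast ⟨m₂ + k, hkm⟩
  have ha' := (haplt ⟨m₂ + k, hkm⟩).1
  have hb' := hb ⟨m₂ + k, hkm⟩
  have hprod : 0 ≤ (-(M ⟨m₂ + k, hkm⟩ ⟨m₂ + k, hkm⟩ : ℝ) - 2) * (1 + a ⟨m₂ + k, hkm⟩) :=
    mul_nonneg (by linarith) (by linarith)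
  have eq1 : t3 k = a ⟨m₂ + k, hkm⟩ := ht3 k hk1 (by omega)
  have ez : a ⟨0, by omega⟩ = a 0 := rfl
  rcases Nat.eq_or_lt_of_le hk1 with hk1' | hk1'
  · rcases Nat.lt_or_ge (m₂ + k) m with hlt | hge
    · have e := key2 (m₂ + k) 0 (m₂ + (k + 1)) hkm (by omega) (by omega)
        (by omega) (by omega) (by omega)
        (by unfold forkAdj; omega) (by unfold forkAdj; omega)
        (by intro j hj hjne hadj'; unfold forkAdj at hadj'; omega)
      have eq0 : t3 (k - 1) = a 0 := by
        have : k - 1 = 0 := by omega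
        rw [this, ht3z]
      have eq2 : t3 (k + 1) = a ⟨m₂ + (k + 1), by omega⟩ := ht3 (k + 1) (by omega) (by omega)
      rw [eq0, eq1, eq2]
      linarith [e, ez]
    · have e := key1 (m₂ + k) 0 hkm (by omega) (by omega)
        (by unfold forkAdj; omega)
        (by intro j hj hjne hadj'; unfold forkAdj at hadj'; omega)
      have eq0 : t3 (k - 1) = a 0 := by
        have : k - 1 = 0 := by omega
        rw [this, ht3z]
      have eq2 : t3 (k + 1) = 0 := ht3' (k + 1) (by omega) (by omega)
      rw [eq0, eq1, eq2]
      linarith [e, ez]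
  · have ep : t3 (k - 1) = a ⟨m₂ + (k - 1), by omega⟩ := ht3 (k - 1) (by omega) (by omega)
    rcases Nat.lt_or_ge (m₂ + k) m with hlt | hge
    · have e := key2 (m₂ + k) (m₂ + (k - 1)) (m₂ + (k + 1)) hkm (by omega) (by omega)
        (by omega) (by omega) (by omega)
        (by unfold forkAdj; omega) (by unfold forkAdj; omega)
        (by intro j hj hjne hadj'; unfold forkAdj at hadj'; omega)
      have eq2 : t3 (k + 1) = a ⟨m₂ + (k + 1), by omega⟩ := ht3 (k + 1) (by omega) (by omega)
      rw [ep, eq1, eq2]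
      linarith
    · have e := key1 (m₂ + k) (m₂ + (k - 1)) hkm (by omega) (by omega)
        (by unfold forkAdj; omega)
        (by intro j hj hjne hadj'; unfold forkAdj at hadj'; omega)
      have eq2 : t3 (k + 1) = 0 := ht3' (k + 1) (by omega) (by omega)
      rw [ep, eq1, eq2]
      linarith


set_option maxHeartbeats 1600000

/-- In the numerical fork setting for the minimal resolution of a plt surface
germ, if `a 0 = a l` for some `l ∈ {1, …, m₁}`, then:
(a) `a i = a 0` for every `0 ≤ i ≤ l`;
(b) `a (m₁+1) = a (m₂+1) = a 0 / 2`;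
(c) `M i i = -2` for every `i ∈ {0, 1, …, l-1} ∪ {m₁+1, m₂+1}`; and
(d) either `m₂ = m₁ + 1` and `m = m₂ + 1`, or `b i = 0`, `a i = 0` and
`M i i = -2` for every `i` (i.e. `B = 0` and `X ∋ x` is Du Val). -/
theorem stmt_9 (m₁ m₂ m : ℕ) (h1 : 0 < m₁) (h2 : m₁ < m₂) (h3 : m₂ < m)
    (M : Matrix (Fin (m + 1)) (Fin (m + 1)) ℤ)
    (hsymm : ∀ i j, M i j = M j i)
    (hadj : ∀ i j : Fin (m + 1), forkAdj m₁ m₂ m i.val j.val → M i j = 1)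
    (hnadj : ∀ i j : Fin (m + 1), i ≠ j → ¬ forkAdj m₁ m₂ m i.val j.val →
      M i j = 0)
    (hdiag : ∀ i, M i i ≤ -2)
    (hnegdef : ∀ x : Fin (m + 1) → ℝ, x ≠ 0 →
      ∑ i, ∑ j, x i * (M i j : ℝ) * x j < 0)
    (b : Fin (m + 1) → ℝ) (hb : ∀ i, 0 ≤ b i)
    (a : Fin (m + 1) → ℝ)
    (ha : ∀ i, ∑ j, (M i j : ℝ) * a j = -2 - (M i i : ℝ) + b i)
    (haplt : ∀ i, -1 < a i ∧ a i ≤ 0)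
    (l : Fin (m + 1)) (hl1 : 1 ≤ l.val) (hl2 : l.val ≤ m₁)
    (hal : a 0 = a l) :
    (∀ i : Fin (m + 1), i.val ≤ l.val → a i = a 0) ∧
    (a ⟨m₁ + 1, by omega⟩ = a 0 / 2 ∧ a ⟨m₂ + 1, by omega⟩ = a 0 / 2) ∧
    (∀ i : Fin (m + 1), (i.val < l.val ∨ i.val = m₁ + 1 ∨ i.val = m₂ + 1) →
      M i i = -2) ∧
    ((m₂ = m₁ + 1 ∧ m = m₂ + 1) ∨
      (∀ i, b i = 0 ∧ a i = 0 ∧ M i i = -2)) := by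
  obtain ⟨pn, hpn1, hpn⟩ : ∃ pn, 1 ≤ pn ∧ m₂ = m₁ + pn := ⟨m₂ - m₁, by omega, by omega⟩
  obtain ⟨qn, hqn1, hqn⟩ : ∃ qn, 1 ≤ qn ∧ m = m₂ + qn := ⟨m - m₂, by omega, by omega⟩
  have hm1 : m₁ + 1 < m + 1 := by omega
  have hm2 : m₂ + 1 < m + 1 := by omega
  have h1m : 1 < m + 1 := by omega
  have hMcast : ∀ i : Fin (m + 1), (M i i : ℝ) ≤ -2 := fun i => by exact_mod_cast hdiag i
  have key1 := aux_key1 m₁ m₂ m h1 h2 h3 M hadj hnadj b a ha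
  have key2 := aux_key2 m₁ m₂ m h1 h2 h3 M hadj hnadj b a ha
  have Efork : (M 0 0 : ℝ) * a 0 + a ⟨1, h1m⟩ + a ⟨m₁ + 1, hm1⟩ + a ⟨m₂ + 1, hm2⟩
      = -2 - (M 0 0 : ℝ) + b 0 := aux_fork m₁ m₂ m h1 h2 h3 M hadj hnadj b a ha
  obtain ⟨t1, ht1, ht1'⟩ : ∃ t : ℕ → ℝ,
      (∀ k (h : k ≤ m₁), t k = a ⟨k, by omega⟩) ∧ (∀ k, m₁ < k → t k = 0) := by
    refine ⟨fun k => if h : k ≤ m₁ then a ⟨k, by omega⟩ else 0, ?_, ?_⟩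
    · intro k h; exact dif_pos h
    · intro k h; exact dif_neg (by omega)
  obtain ⟨t2, ht2z, ht2, ht2'⟩ : ∃ t : ℕ → ℝ, t 0 = a 0 ∧
      (∀ k (h1 : 1 ≤ k) (h2 : m₁ + k ≤ m₂), t k = a ⟨m₁ + k, by omega⟩) ∧
      (∀ k, 1 ≤ k → m₂ < m₁ + k → t k = 0) := by
    refine ⟨fun k => if hk : k = 0 then a 0 else
      if h : m₁ + k ≤ m₂ then a ⟨m₁ + k, by omega⟩ else 0, ?_, ?_, ?_⟩
    · simp
    · intro k hk1 hk2; beta_reduce; rw [dif_neg (by omega), dif_pos hk2]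
    · intro k hk1 hk2; beta_reduce; rw [dif_neg (by omega), dif_neg (by omega)]
  obtain ⟨t3, ht3z, ht3, ht3'⟩ : ∃ t : ℕ → ℝ, t 0 = a 0 ∧
      (∀ k (h1 : 1 ≤ k) (h2 : m₂ + k ≤ m), t k = a ⟨m₂ + k, by omega⟩) ∧
      (∀ k, 1 ≤ k → m < m₂ + k → t k = 0) := by
    refine ⟨fun k => if hk : k = 0 then a 0 else
      if h : m₂ + k ≤ m then a ⟨m₂ + k, by omega⟩ else 0, ?_, ?_, ?_⟩
    · simp
    · intro k hk1 hk2; beta_reduce; rw [dif_neg (by omega), dif_pos hk2]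
    · intro k hk1 hk2; beta_reduce; rw [dif_neg (by omega), dif_neg (by omega)]
  have conv1 := aux_conv1 m₁ m₂ m h1 h2 h3 M hadj hnadj b a ha hdiag hb haplt t1 ht1 ht1'
  have conv2 := aux_conv2 m₁ m₂ m h1 h2 h3 M hadj hnadj b a ha hdiag hb haplt pn hpn1 hpn t2 ht2z ht2 ht2'
  have conv3 := aux_conv3 m₁ m₂ m h1 h2 h3 M hadj hnadj b a ha hdiag hb haplt qn hqn1 hqn t3 ht3z ht3 ht3'
  -- ===== the three boundary inequalities =====
  have F1 : a ⟨1, h1m⟩ ≤ a 0 := by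
    have hlow := seq_lower t1 m₁ conv1 l.val (by omega)
    have e0 : t1 0 = a 0 := ht1 0 (by omega)
    have e1 : t1 1 = a ⟨1, h1m⟩ := ht1 1 (by omega)
    have el : t1 l.val = a 0 :=
      (ht1 l.val hl2).trans ((congrArg a (Fin.eta l l.isLt)).trans hal.symm)
    have hl2' : (1 : ℝ) ≤ (l.val : ℝ) := by exact_mod_cast hl1
    by_contra hcon
    push_neg at hcon
    have hstep : (1 : ℝ) * (a ⟨1, h1m⟩ - a 0) ≤ (l.val : ℝ) * (a ⟨1, h1m⟩ - a 0) :=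
      mul_le_mul_of_nonneg_right hl2' (by linarith)
    rw [e0, e1, el] at hlow
    linarith
  have F2 : a 0 + ((pn : ℝ) + 1) * (a ⟨m₁ + 1, hm1⟩ - a 0) ≤ 0 := by
    have hlow := seq_lower t2 pn conv2 (pn + 1) le_rfl
    have e0 : t2 0 = a 0 := ht2z
    have e1 : t2 1 = a ⟨m₁ + 1, hm1⟩ := ht2 1 le_rfl (by omega)
    have e2 : t2 (pn + 1) = 0 := ht2' _ (by omega) (by omega)
    rw [e0, e1, e2] at hlow
    push_cast at hlow
    linarith
  have F3 : a 0 + ((qn : ℝ) + 1) * (a ⟨m₂ + 1, hm2⟩ - a 0) ≤ 0 := by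
    have hlow := seq_lower t3 qn conv3 (qn + 1) le_rfl
    have e0 : t3 0 = a 0 := ht3z
    have e1 : t3 1 = a ⟨m₂ + 1, hm2⟩ := ht3 1 le_rfl (by omega)
    have e2 : t3 (qn + 1) = 0 := ht3' _ (by omega) (by omega)
    rw [e0, e1, e2] at hlow
    push_cast at hlow
    linarith
  -- ===== the fork computation =====
  set P : ℝ := (pn : ℝ) + 1 with hPdef
  set Q : ℝ := (qn : ℝ) + 1 with hQdef
  have FP : (2 : ℝ) ≤ P := by
    have : (1 : ℝ) ≤ (pn : ℝ) := by exact_mod_cast hpn1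
    rw [hPdef]; linarith
  have FQ : (2 : ℝ) ≤ Q := by
    have : (1 : ℝ) ≤ (qn : ℝ) := by exact_mod_cast hqn1
    rw [hQdef]; linarith
  have hP0 : (0 : ℝ) ≤ P := by linarith
  have hQ0 : (0 : ℝ) ≤ Q := by linarith
  have hPQ4 : (4 : ℝ) ≤ P * Q := by nlinarith
  have hc : (0 : ℝ) ≤ P * Q - P - Q := by nlinarith
  have Fa0 := (haplt 0).2
  have Fa0' := (haplt 0).1
  have Fs' : 0 ≤ (-(M 0 0 : ℝ) - 2) * (1 + a 0) + b 0 := by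
    have := mul_nonneg (by linarith [hMcast 0] : (0 : ℝ) ≤ -(M 0 0 : ℝ) - 2)
      (by linarith : (0 : ℝ) ≤ 1 + a 0)
    linarith [hb 0]
  have F4' : a ⟨1, h1m⟩ + a ⟨m₁ + 1, hm1⟩ + a ⟨m₂ + 1, hm2⟩
      = 2 * a 0 + ((-(M 0 0 : ℝ) - 2) * (1 + a 0) + b 0) := by
    linear_combination Efork
  have hk1 : P * Q * (a ⟨1, h1m⟩) ≤ P * Q * (a 0) :=
    mul_le_mul_of_nonneg_left F1 (mul_nonneg hP0 hQ0)
  have hk2 : Q * (P * (a ⟨m₁ + 1, hm1⟩ - a 0)) ≤ Q * (-(a 0)) :=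
    mul_le_mul_of_nonneg_left (by linarith [F2]) hQ0
  have hk3 : P * (Q * (a ⟨m₂ + 1, hm2⟩ - a 0)) ≤ P * (-(a 0)) :=
    mul_le_mul_of_nonneg_left (by linarith [F3]) hP0
  have hk4 : P * Q * (a ⟨1, h1m⟩ + a ⟨m₁ + 1, hm1⟩ + a ⟨m₂ + 1, hm2⟩)
      = P * Q * (2 * a 0 + ((-(M 0 0 : ℝ) - 2) * (1 + a 0) + b 0)) := by rw [F4']
  have G1 : P * Q * ((-(M 0 0 : ℝ) - 2) * (1 + a 0) + b 0) ≤ a 0 * (P * Q - P - Q) := by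
    linarith [hk1, hk2, hk3, hk4]
  have Gneg : a 0 * (P * Q - P - Q) ≤ 0 := by
    linarith [mul_nonneg (by linarith : (0 : ℝ) ≤ -(a 0)) hc]
  have Gpos : 0 ≤ P * Q * ((-(M 0 0 : ℝ) - 2) * (1 + a 0) + b 0) :=
    mul_nonneg (mul_nonneg hP0 hQ0) Fs'
  have hPQs : P * Q * ((-(M 0 0 : ℝ) - 2) * (1 + a 0) + b 0) = 0 :=
    le_antisymm (by linarith) Gpos
  have hs0 : (-(M 0 0 : ℝ) - 2) * (1 + a 0) + b 0 = 0 := by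
    rcases mul_eq_zero.mp hPQs with h | h
    · linarith [hPQ4]
    · exact h
  have hplane : a 0 * (P * Q - P - Q) = 0 := le_antisymm Gneg (by linarith)
  have hb00 : b 0 = 0 := by
    linarith [mul_nonneg (by linarith [hMcast 0] : (0 : ℝ) ≤ -(M 0 0 : ℝ) - 2)
      (by linarith : (0 : ℝ) ≤ 1 + a 0), hb 0]
  have hM00R : (M 0 0 : ℝ) = -2 := by
    have hpp : (-(M 0 0 : ℝ) - 2) * (1 + a 0) = 0 := by linarith
    rcases mul_eq_zero.mp hpp with h | h
    · linarith
    · linarith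
  have hM00 : M 0 0 = -2 := by exact_mod_cast hM00R
  -- equalities at the fork
  have hk1' : P * Q * (a 0 - a ⟨1, h1m⟩) = 0 := by
    have h6 : P * Q * (a 0 - a ⟨1, h1m⟩) ≤ 0 := by
      linarith [hk2, hk3, hk4, hPQs, hplane]
    have h7 : 0 ≤ P * Q * (a 0 - a ⟨1, h1m⟩) :=
      mul_nonneg (mul_nonneg hP0 hQ0) (by linarith [F1])
    linarith
  have hA1eq : a ⟨1, h1m⟩ = a 0 := by
    rcases mul_eq_zero.mp hk1' with h | h
    · linarith [hPQ4]
    · linarith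
  have hk1'' : P * Q * (a ⟨1, h1m⟩) = P * Q * (a 0) := by rw [hA1eq]
  have hAeq : P * (a ⟨m₁ + 1, hm1⟩ - a 0) = -(a 0) := by
    have h8 : Q * (P * (a ⟨m₁ + 1, hm1⟩ - a 0) + a 0) = 0 := by
      have h8a : Q * (P * (a ⟨m₁ + 1, hm1⟩ - a 0) + a 0) ≤ 0 := by linarith [hk2]
      have h8b : 0 ≤ Q * (P * (a ⟨m₁ + 1, hm1⟩ - a 0) + a 0) := by
        linarith [hk3, hk4, hk1'', hPQs, hplane]
      linarith
    rcases mul_eq_zero.mp h8 with h | h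
    · linarith
    · linarith
  have hk2'' : Q * (P * (a ⟨m₁ + 1, hm1⟩ - a 0)) = Q * (-(a 0)) := by rw [hAeq]
  have hBeq : Q * (a ⟨m₂ + 1, hm2⟩ - a 0) = -(a 0) := by
    have h9 : P * (Q * (a ⟨m₂ + 1, hm2⟩ - a 0) + a 0) = 0 := by
      have h9a : P * (Q * (a ⟨m₂ + 1, hm2⟩ - a 0) + a 0) ≤ 0 := by linarith [hk3]
      have h9b : 0 ≤ P * (Q * (a ⟨m₂ + 1, hm2⟩ - a 0) + a 0) := by
        linarith [hk2'', hk4, hk1'', hPQs, hplane]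
      linarith
    rcases mul_eq_zero.mp h9 with h | h
    · linarith
    · linarith
  -- constancy on the segment up to l
  have h01 : t1 0 ≤ t1 1 := by
    have e0 : t1 0 = a 0 := ht1 0 (by omega)
    have e1 : t1 1 = a ⟨1, h1m⟩ := ht1 1 (by omega)
    rw [e0, e1, hA1eq]
  have hconst : ∀ k (hk : k ≤ l.val), a ⟨k, by omega⟩ = a 0 := by
    intro k hk
    have hmo1 : t1 k ≤ t1 l.val := seq_mono t1 m₁ conv1 h01 l.val (by omega) k hk
    have hmo2 : t1 0 ≤ t1 k := seq_mono t1 m₁ conv1 h01 k (by omega) 0 (Nat.zero_le _)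
    have e0 : t1 0 = a 0 := ht1 0 (by omega)
    have el : t1 l.val = a 0 :=
      (ht1 l.val hl2).trans ((congrArg a (Fin.eta l l.isLt)).trans hal.symm)
    have ek : t1 k = a ⟨k, by omega⟩ := ht1 k (by omega)
    rw [ek] at hmo1 hmo2
    rw [e0] at hmo2
    rw [el] at hmo1
    linarith
  -- ===== case split on a 0 =====
  rcases eq_or_lt_of_le Fa0 with hzero | hneg
  · -- CASE A : a 0 = 0 ; everything is Du Val
    replace hzero : a 0 = 0 := hzero
    have hA0 : a ⟨m₁ + 1, hm1⟩ = 0 := by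
      have hPA : P * a ⟨m₁ + 1, hm1⟩ = 0 := by
        have := hAeq
        rw [hzero] at this
        linarith [this]
      rcases mul_eq_zero.mp hPA with h | h
      · linarith
      · exact h
    have hB0 : a ⟨m₂ + 1, hm2⟩ = 0 := by
      have hQB : Q * a ⟨m₂ + 1, hm2⟩ = 0 := by
        have := hBeq
        rw [hzero] at this
        linarith [this]
      rcases mul_eq_zero.mp hQB with h | h
      · linarith
      · exact h
    have hz1 : ∀ k (hk : k ≤ m₁), a ⟨k, by omega⟩ = 0 := by
      intro k hk
      have hmono : t1 0 ≤ t1 k := seq_mono t1 m₁ conv1 h01 k (by omega) 0 (Nat.zero_le _)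
      have e0 : t1 0 = a 0 := ht1 0 (by omega)
      have ek : t1 k = a ⟨k, by omega⟩ := ht1 k hk
      have hle := (haplt ⟨k, by omega⟩).2
      rw [e0, hzero, ek] at hmono
      linarith
    have h01₂ : t2 0 ≤ t2 1 := by
      have e1 : t2 1 = a ⟨m₁ + 1, hm1⟩ := ht2 1 le_rfl (by omega)
      rw [ht2z, hzero, e1, hA0]
    have hz2 : ∀ k (h1k : 1 ≤ k) (hk : m₁ + k ≤ m₂), a ⟨m₁ + k, by omega⟩ = 0 := by
      intro k h1k hk
      have hmono : t2 0 ≤ t2 k := seq_mono t2 pn conv2 h01₂ k (by omega) 0 (Nat.zero_le _)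
      have ek : t2 k = a ⟨m₁ + k, by omega⟩ := ht2 k h1k hk
      have hle := (haplt ⟨m₁ + k, by omega⟩).2
      rw [ht2z, hzero, ek] at hmono
      linarith
    have h01₃ : t3 0 ≤ t3 1 := by
      have e1 : t3 1 = a ⟨m₂ + 1, hm2⟩ := ht3 1 le_rfl (by omega)
      rw [ht3z, hzero, e1, hB0]
    have hz3 : ∀ k (h1k : 1 ≤ k) (hk : m₂ + k ≤ m), a ⟨m₂ + k, by omega⟩ = 0 := by
      intro k h1k hk
      have hmono : t3 0 ≤ t3 k := seq_mono t3 qn conv3 h01₃ k (by omega) 0 (Nat.zero_le _)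
      have ek : t3 k = a ⟨m₂ + k, by omega⟩ := ht3 k h1k hk
      have hle := (haplt ⟨m₂ + k, by omega⟩).2
      rw [ht3z, hzero, ek] at hmono
      linarith
    have hallz : ∀ i : Fin (m + 1), a i = 0 := by
      intro i
      have hv := i.isLt
      have hie : ∀ (k : ℕ) (hk : k < m + 1), k = i.val → a ⟨k, hk⟩ = a i :=
        fun k hk hke => congrArg a (Fin.ext hke)
      rcases Nat.lt_or_ge i.val (m₁ + 1) with hcc | hcc
      · rw [← hie i.val hv rfl]
        exact hz1 i.val (by omega)
      · rcases Nat.lt_or_ge i.val (m₂ + 1) with hcc2 | hcc2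
        · rw [← hie (m₁ + (i.val - m₁)) (by omega) (by omega)]
          exact hz2 (i.val - m₁) (by omega) (by omega)
        · rw [← hie (m₂ + (i.val - m₂)) (by omega) (by omega)]
          exact hz3 (i.val - m₂) (by omega) (by omega)
    have hfin : ∀ i, b i = 0 ∧ a i = 0 ∧ M i i = -2 := by
      intro i
      have h := ha i
      have hsz : ∑ j, (M i j : ℝ) * a j = 0 :=
        Finset.sum_eq_zero (fun j _ => by rw [hallz j, mul_zero])
      rw [hsz] at h
      have hM' := hMcast i
      have hb' := hb i
      refine ⟨by linarith, hallz i, ?_⟩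
      have hMR : (M i i : ℝ) = -2 := by linarith
      exact_mod_cast hMR
    refine ⟨fun i _ => by rw [hallz i, hallz 0], ⟨?_, ?_⟩,
      fun i _ => (hfin i).2.2, Or.inr hfin⟩
    · simp [hallz]
    · simp [hallz]
  · -- CASE B : a 0 < 0
    have hcc0 : P * Q - P - Q = 0 := by
      rcases mul_eq_zero.mp hplane with h | h
      · exact absurd h (ne_of_lt hneg)
      · exact h
    have hsum4 : P + Q ≤ 4 := by nlinarith [FP, FQ, hcc0]
    have hP2 : P = 2 := by linarith
    have hQ2 : Q = 2 := by linarith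
    have hpn1' : pn = 1 := by
      have hcast : (pn : ℝ) = 1 := by rw [hPdef] at hP2; linarith
      exact_mod_cast hcast
    have hqn1' : qn = 1 := by
      have hcast : (qn : ℝ) = 1 := by rw [hQdef] at hQ2; linarith
      exact_mod_cast hcast
    have hm₂e : m₂ = m₁ + 1 := by omega
    have hme : m = m₂ + 1 := by omega
    have hA2 : a ⟨m₁ + 1, hm1⟩ = a 0 / 2 := by
      have h := hAeq
      rw [hP2] at h
      linarith
    have hB2 : a ⟨m₂ + 1, hm2⟩ = a 0 / 2 := by
      have h := hBeq
      rw [hQ2] at h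
      linarith
    have parta : ∀ i : Fin (m + 1), i.val ≤ l.val → a i = a 0 := by
      intro i hi
      have hcf := hconst i.val (by omega)
      exact (congrArg a (Fin.ext (rfl : i.val = i.val))).trans hcf
    have partc : ∀ i : Fin (m + 1),
        (i.val < l.val ∨ i.val = m₁ + 1 ∨ i.val = m₂ + 1) → M i i = -2 := by
      intro i hi
      rcases hi with hi | hi | hi
      · rcases Nat.eq_zero_or_pos i.val with hi0 | hi0
        · have hieq : i = 0 := Fin.ext hi0
          rw [hieq]
          exact hM00
        · have e := key2 i.val (i.val - 1) (i.val + 1) i.isLt (by omega) (by omega)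
            (by omega) (by omega) (by omega)
            (by unfold forkAdj; omega) (by unfold forkAdj; omega)
            (by intro j hj hjne hadj'; unfold forkAdj at hadj'; omega)
          have c1 : a ⟨i.val, i.isLt⟩ = a 0 := hconst i.val (by omega)
          have c2 : a ⟨i.val - 1, by omega⟩ = a 0 := hconst (i.val - 1) (by omega)
          have c3 : a ⟨i.val + 1, by omega⟩ = a 0 := hconst (i.val + 1) (by omega)
          rw [c1, c2, c3] at e
          have hM' := hMcast ⟨i.val, i.isLt⟩
          have hb' := hb ⟨i.val, i.isLt⟩
          have hprod : 0 ≤ (-(M ⟨i.val, i.isLt⟩ ⟨i.val, i.isLt⟩ : ℝ) - 2) * (1 + a 0) :=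
            mul_nonneg (by linarith) (by linarith)
          have hbz : b ⟨i.val, i.isLt⟩ = 0 := by linarith
          have hMR : (M ⟨i.val, i.isLt⟩ ⟨i.val, i.isLt⟩ : ℝ) = -2 := by
            have h10 : (-(M ⟨i.val, i.isLt⟩ ⟨i.val, i.isLt⟩ : ℝ) - 2) * (1 + a 0) = 0 := by
              linarith
            rcases mul_eq_zero.mp h10 with h | h
            · linarith
            · linarith
          have hieq : i = ⟨i.val, i.isLt⟩ := Fin.ext rfl
          rw [hieq]
          exact_mod_cast hMR
      · have e := key1 (m₁ + 1) 0 (by omega) (by omega) (by omega)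
          (by unfold forkAdj; omega)
          (by intro j hj hjne hadj'; unfold forkAdj at hadj'; omega)
        rw [hA2] at e
        have hM' := hMcast ⟨m₁ + 1, by omega⟩
        have hb' := hb ⟨m₁ + 1, by omega⟩
        have ez : a ⟨0, by omega⟩ = a 0 := rfl
        have hprod : 0 ≤ (-(M ⟨m₁ + 1, by omega⟩ ⟨m₁ + 1, by omega⟩ : ℝ) - 2) * (1 + a 0 / 2) :=
          mul_nonneg (by linarith) (by linarith)
        have hbz : b ⟨m₁ + 1, by omega⟩ = 0 := by linarith [e, ez]
        have hMR : (M ⟨m₁ + 1, by omega⟩ ⟨m₁ + 1, by omega⟩ : ℝ) = -2 := by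
          have h10 : (-(M ⟨m₁ + 1, by omega⟩ ⟨m₁ + 1, by omega⟩ : ℝ) - 2) * (1 + a 0 / 2) = 0 := by
            linarith [e, ez]
          rcases mul_eq_zero.mp h10 with h | h
          · linarith
          · linarith
        have hieq : i = ⟨m₁ + 1, by omega⟩ := Fin.ext hi
        rw [hieq]
        exact_mod_cast hMR
      · have e := key1 (m₂ + 1) 0 (by omega) (by omega) (by omega)
          (by unfold forkAdj; omega)
          (by intro j hj hjne hadj'; unfold forkAdj at hadj'; omega)
        rw [hB2] at e
        have hM' := hMcast ⟨m₂ + 1, by omega⟩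
        have hb' := hb ⟨m₂ + 1, by omega⟩
        have ez : a ⟨0, by omega⟩ = a 0 := rfl
        have hprod : 0 ≤ (-(M ⟨m₂ + 1, by omega⟩ ⟨m₂ + 1, by omega⟩ : ℝ) - 2) * (1 + a 0 / 2) :=
          mul_nonneg (by linarith) (by linarith)
        have hbz : b ⟨m₂ + 1, by omega⟩ = 0 := by linarith [e, ez]
        have hMR : (M ⟨m₂ + 1, by omega⟩ ⟨m₂ + 1, by omega⟩ : ℝ) = -2 := by
          have h10 : (-(M ⟨m₂ + 1, by omega⟩ ⟨m₂ + 1, by omega⟩ : ℝ) - 2) * (1 + a 0 / 2) = 0 := by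
            linarith [e, ez]
          rcases mul_eq_zero.mp h10 with h | h
          · linarith
          · linarith
        have hieq : i = ⟨m₂ + 1, by omega⟩ := Fin.ext hi
        rw [hieq]
        exact_mod_cast hMR
    exact ⟨parta, ⟨hA2, hB2⟩, partc, Or.inl ⟨hm₂e, hme⟩⟩
end
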